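/- arXiv:2212.04640 — 5 statements merged into one kernel-verified Lean document; each statement's English description precedes it below -/
import Mathlib

section
/- For every integer k ≥ 1, every edge-colored graph in F̂_k has at least k+1 vertices (that is, f(k) ≥ k+1); moreover, for every integer k ≥ 3, every edge-colored graph in F̂_k has at least k+2 vertices (that is, f(k) ≥ k+2). -/
open SimpleGraph

variable {V : Type*} {W : Type*}

open Classical in
/-- Update an edge-coloring by giving the pair `e` the color `col`. -/
noncomputable def addColor (c : Sym2 V → ℕ) (e : Sym2 V) (col : ℕ) : Sym2 V → ℕ :=
  Function.update c e col

/-- The edge-colored graph `(G, c)` contains a rainbow `k`-clique avoiding all vertices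
in `A` and using no color from `C`. -/
def HasRainbowKClique (G : SimpleGraph V) (c : Sym2 V → ℕ) (k : ℕ)
    (A : Set V) (C : Set ℕ) : Prop :=
  ∃ f : Fin k ↪ V, (∀ i, f i ∉ A) ∧ (∀ i j, i ≠ j → G.Adj (f i) (f j)) ∧
    (∀ i j, i ≠ j → c s(f i, f j) ∉ C) ∧
    (∀ i j i' j', i ≠ j → i' ≠ j' → c s(f i, f j) = c s(f i', f j') → s(i, j) = s(i', j'))

/-- The edge-colored graph `(G, c)` contains a rainbow `k`-clique using the pair `e`. -/
def HasRainbowKCliqueOn (G : SimpleGraph V) (c : Sym2 V → ℕ) (k : ℕ) (e : Sym2 V) : Prop :=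
  ∃ f : Fin k ↪ V, (∀ i j, i ≠ j → G.Adj (f i) (f j)) ∧
    (∃ i j, i ≠ j ∧ s(f i, f j) = e) ∧
    (∀ i j i' j', i ≠ j → i' ≠ j' → c s(f i, f j) = c s(f i', f j') → s(i, j) = s(i', j'))

/-- The edge-colored graph `(G, c)` is `R(K_r)`-saturated: it has no rainbow `K_r`, and
adding any non-edge in any color creates a rainbow `K_r`. -/
def RKSat (r : ℕ) (G : SimpleGraph V) (c : Sym2 V → ℕ) : Prop :=
  ¬ HasRainbowKClique G c r ∅ ∅ ∧
  ∀ u v : V, u ≠ v → ¬ G.Adj u v → ∀ col : ℕ,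
    HasRainbowKClique (G ⊔ fromEdgeSet {s(u, v)}) (addColor c s(u, v) col) r ∅ ∅

/-- The edge-colored graph `(G, c)` is `R(K_r)`-semisaturated: adding any non-edge in any
color creates a rainbow `K_r` using the new edge. -/
def RKSemiSat (r : ℕ) (G : SimpleGraph V) (c : Sym2 V → ℕ) : Prop :=
  ∀ u v : V, u ≠ v → ¬ G.Adj u v → ∀ col : ℕ,
    HasRainbowKCliqueOn (G ⊔ fromEdgeSet {s(u, v)}) (addColor c s(u, v) col) r s(u, v)

/-- The rainbow saturation number of `K_r` on `n` vertices. -/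
noncomputable def rsatK (r n : ℕ) : ℕ :=
  sInf {m | ∃ (G : SimpleGraph (Fin n)) (c : Sym2 (Fin n) → ℕ),
    RKSat r G c ∧ G.edgeSet.ncard = m}

/-- The rainbow semisaturation number of `K_r` on `n` vertices. -/
noncomputable def rssatK (r n : ℕ) : ℕ :=
  sInf {m | ∃ (G : SimpleGraph (Fin n)) (c : Sym2 (Fin n) → ℕ),
    RKSemiSat r G c ∧ G.edgeSet.ncard = m}

/-- Membership in the class `F̂_k`. -/
def FHat (k : ℕ) (G : SimpleGraph V) (c : Sym2 V → ℕ) : Prop :=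
  ¬ HasRainbowKClique G c (k + 1) ∅ ∅ ∧
  (∀ v : V, HasRainbowKClique G c k {v} ∅) ∧
  (∀ col : ℕ, HasRainbowKClique G c k ∅ {col})

/-- `f(k)`: the minimum number of vertices of an edge-colored graph in `F̂_k`. -/
noncomputable def fF (k : ℕ) : ℕ :=
  sInf {m | ∃ (G : SimpleGraph (Fin m)) (c : Sym2 (Fin m) → ℕ), FHat k G c}

/-- `g'(k)`: the minimum number of edges of an `f(k)`-vertex edge-colored graph in `F̂_k`. -/
noncomputable def gF' (k : ℕ) : ℕ :=
  sInf {m | ∃ (G : SimpleGraph (Fin (fF k))) (c : Sym2 (Fin (fF k)) → ℕ),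
    FHat k G c ∧ G.edgeSet.ncard = m}

/-- `g(k)`: the minimum number of edges of an `f(k)`-vertex edge-colored graph in `F̂_k`
which is moreover `R(K_{k+1})`-saturated. -/
noncomputable def gF (k : ℕ) : ℕ :=
  sInf {m | ∃ (G : SimpleGraph (Fin (fF k))) (c : Sym2 (Fin (fF k)) → ℕ),
    FHat k G c ∧ RKSat (k + 1) G c ∧ G.edgeSet.ncard = m}

/-- `G` contains a copy of `H`. -/
def HasCopy (G : SimpleGraph V) (H : SimpleGraph W) : Prop :=
  ∃ f : W ↪ V, ∀ a b, H.Adj a b → G.Adj (f a) (f b)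

/-- `G` contains a copy of `H` using the pair `e`. -/
def HasCopyOn (G : SimpleGraph V) (H : SimpleGraph W) (e : Sym2 V) : Prop :=
  ∃ f : W ↪ V, (∀ a b, H.Adj a b → G.Adj (f a) (f b)) ∧ ∃ a b, H.Adj a b ∧ s(f a, f b) = e

/-- `G` is `H`-saturated. -/
def Saturated (G : SimpleGraph V) (H : SimpleGraph W) : Prop :=
  ¬ HasCopy G H ∧ ∀ u v : V, u ≠ v → ¬ G.Adj u v → HasCopy (G ⊔ fromEdgeSet {s(u, v)}) H

/-- `G` is `H`-semisaturated: adding any non-edge creates a new copy of `H`. -/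
def SemiSaturated (G : SimpleGraph V) (H : SimpleGraph W) : Prop :=
  ∀ u v : V, u ≠ v → ¬ G.Adj u v → HasCopyOn (G ⊔ fromEdgeSet {s(u, v)}) H s(u, v)

/-- It is not possible to remove one edge of `G` and then add two new edges without
creating a new copy of `H` (using one of the added edges). -/
def Pert1 (G : SimpleGraph V) (H : SimpleGraph W) : Prop :=
  ∀ e ∈ G.edgeSet, ∀ e₁ e₂ : Sym2 V, e₁ ≠ e₂ → ¬ e₁.IsDiag → ¬ e₂.IsDiag →
    e₁ ∉ (G.deleteEdges {e}).edgeSet → e₂ ∉ (G.deleteEdges {e}).edgeSet →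
    HasCopyOn (G.deleteEdges {e} ⊔ fromEdgeSet {e₁, e₂}) H e₁ ∨
    HasCopyOn (G.deleteEdges {e} ⊔ fromEdgeSet {e₁, e₂}) H e₂

/-- `G` is `(H,1)`-saturated. -/
def Sat1 (G : SimpleGraph V) (H : SimpleGraph W) : Prop :=
  Saturated G H ∧ Pert1 G H

/-- `G` is `(H,1)`-semisaturated. -/
def SemiSat1 (G : SimpleGraph V) (H : SimpleGraph W) : Prop :=
  SemiSaturated G H ∧ Pert1 G H

/-- The `(K_r,1)`-saturation number on `n` vertices. -/
noncomputable def sat1K (r n : ℕ) : ℕ :=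
  sInf {m | ∃ G : SimpleGraph (Fin n), Sat1 G (⊤ : SimpleGraph (Fin r)) ∧ G.edgeSet.ncard = m}

/-- The `(K_r,1)`-semisaturation number on `n` vertices. -/
noncomputable def ssat1K (r n : ℕ) : ℕ :=
  sInf {m | ∃ G : SimpleGraph (Fin n), SemiSat1 G (⊤ : SimpleGraph (Fin r)) ∧ G.edgeSet.ncard = m}

/-- The join `K_a + K̄_b` of a complete graph on `a` vertices with an edgeless
graph on `b` vertices. -/
def cliqueJoinEmpty (a b : ℕ) : SimpleGraph (Fin a ⊕ Fin b) :=
  SimpleGraph.fromRel (fun u _ => u.isLeft = true)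

/-- The complete multipartite graph with `r - 2` parts of size `2` and one part of size
`n + 4 - 2r`, i.e. the join of the complement of a perfect matching on `2(r-2)` vertices
with an edgeless graph. -/
def matchingComplementJoinEmpty (r n : ℕ) :
    SimpleGraph ((Fin (r - 2) × Fin 2) ⊕ Fin (n + 4 - 2 * r)) :=
  SimpleGraph.fromRel (fun u v =>
    match u, v with
    | Sum.inl x, Sum.inl y => x.1 ≠ y.1
    | Sum.inl _, Sum.inr _ => True
    | Sum.inr _, Sum.inl _ => True
    | Sum.inr _, Sum.inr _ => False)

/-- The edge-colored graph `(G, c)` has a subgraph belonging to `F̂_k` (the subgraph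
inherits its edge-colors from `c`). -/
def HasSubgraphInFHat (k : ℕ) (G : SimpleGraph V) (c : Sym2 V → ℕ) : Prop :=
  ∃ (s : Set V) (H : SimpleGraph s), (∀ a b : s, H.Adj a b → G.Adj a b) ∧
    FHat k H (fun e => c (Sym2.map Subtype.val e))

/-- Membership in the class `F_r`: an `f(r-2)`-vertex edge-colored graph some subgraph of
which lies in `F̂_{r-2}`. -/
def MemFr (r : ℕ) (G : SimpleGraph V) (c : Sym2 V → ℕ) : Prop :=
  (Set.univ : Set V).ncard = fF (r - 2) ∧ HasSubgraphInFHat (r - 2) G c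

/-- A rainbow copy of `H` in the edge-colored graph `(G, c)`. -/
def HasRainbowCopy (G : SimpleGraph V) (c : Sym2 V → ℕ) (H : SimpleGraph W) : Prop :=
  ∃ f : W ↪ V, (∀ a b, H.Adj a b → G.Adj (f a) (f b)) ∧
    (∀ a b a' b', H.Adj a b → H.Adj a' b' →
      c s(f a, f b) = c s(f a', f b') → s(a, b) = s(a', b'))

/-- A rainbow copy of `H` in `(G, c)` using the pair `e`. -/
def HasRainbowCopyOn (G : SimpleGraph V) (c : Sym2 V → ℕ) (H : SimpleGraph W)
    (e : Sym2 V) : Prop :=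
  ∃ f : W ↪ V, (∀ a b, H.Adj a b → G.Adj (f a) (f b)) ∧
    (∃ a b, H.Adj a b ∧ s(f a, f b) = e) ∧
    (∀ a b a' b', H.Adj a b → H.Adj a' b' →
      c s(f a, f b) = c s(f a', f b') → s(a, b) = s(a', b'))

/-- The edge-colored graph `(G, c)` is `R(H)`-saturated. -/
def RSat (G : SimpleGraph V) (c : Sym2 V → ℕ) (H : SimpleGraph W) : Prop :=
  ¬ HasRainbowCopy G c H ∧
  ∀ u v : V, u ≠ v → ¬ G.Adj u v → ∀ col : ℕ,
    HasRainbowCopy (G ⊔ fromEdgeSet {s(u, v)}) (addColor c s(u, v) col) H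

/-- The edge-colored graph `(G, c)` is `R(H)`-semisaturated. -/
def RSemiSat (G : SimpleGraph V) (c : Sym2 V → ℕ) (H : SimpleGraph W) : Prop :=
  ∀ u v : V, u ≠ v → ¬ G.Adj u v → ∀ col : ℕ,
    HasRainbowCopyOn (G ⊔ fromEdgeSet {s(u, v)}) (addColor c s(u, v) col) H s(u, v)

/-- `sat(R(K_n), R(K_r))`: the minimum number of edges of an `n`-vertex graph `G` such
that `G`, rainbow colored, is `R(K_r)`-saturated. -/
noncomputable def satRK (r n : ℕ) : ℕ :=
  sInf {m | ∃ (G : SimpleGraph (Fin n)) (c : Sym2 (Fin n) → ℕ),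
    Set.InjOn c G.edgeSet ∧ RKSat r G c ∧ G.edgeSet.ncard = m}

/-- `G` is `(H,k)`-saturated. -/
def SatK (k : ℕ) (G : SimpleGraph V) (H : SimpleGraph W) : Prop :=
  ¬ HasCopy G H ∧
  ∀ D : Finset (Sym2 V), D.card = k → (↑D : Set (Sym2 V)) ⊆ G.edgeSet →
  ∀ A : Finset (Sym2 V), A.card = k + 1 → (∀ e ∈ A, ¬ e.IsDiag) →
    (∀ e ∈ A, e ∉ (G.deleteEdges ↑D).edgeSet) →
    HasCopy (G.deleteEdges ↑D ⊔ fromEdgeSet ↑A) H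

/-- `sat_k(n, H)`. -/
noncomputable def satKnum (k n : ℕ) (H : SimpleGraph W) : ℕ :=
  sInf {m | ∃ G : SimpleGraph (Fin n), SatK k G H ∧ G.edgeSet.ncard = m}


section FFAux

private lemma sym2_map_eq_iff' {α β : Type*} {f : α → β} (hf : Function.Injective f)
    {i j i' j' : α} : s(f i, f j) = s(f i', f j') ↔ s(i, j) = s(i', j') := by
  rw [← Sym2.map_pair_eq f, ← Sym2.map_pair_eq f]
  exact ⟨fun h => Sym2.map.injective hf h, fun h => by rw [h]⟩

private lemma fhat_card_lb1 {V : Type} [Fintype V] {k : ℕ} (hk : 1 ≤ k)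
    {G : SimpleGraph V} {c : Sym2 V → ℕ} (h : FHat k G c) :
    k + 1 ≤ Fintype.card V := by
  classical
  obtain ⟨f, -, -, -, -⟩ := h.2.2 0
  set v := f ⟨0, hk⟩ with hv
  obtain ⟨g, hg, -, -, -⟩ := h.2.1 v
  have hvnot : v ∉ Finset.univ.image (fun i => g i) := by
    simp only [Finset.mem_image]
    rintro ⟨i, -, hi⟩
    exact hg i (by simp [hi])
  have hcard : (insert v (Finset.univ.image (fun i => g i))).card = k + 1 := by
    rw [Finset.card_insert_of_notMem hvnot,
      Finset.card_image_of_injective _ g.injective, Finset.card_fin]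
  calc k + 1 = _ := hcard.symm
    _ ≤ Fintype.card V := Finset.card_le_univ _



private def sideG (k : ℕ) : SimpleGraph (Fin (2 * k)) where
  Adj u v := u ≠ v ∧ ((u : ℕ) < k ↔ (v : ℕ) < k)
  symm := ⟨fun u v h => ⟨h.1.symm, h.2.symm⟩⟩
  loopless := ⟨fun u h => h.1 rfl⟩

private lemma sideG_adj {k : ℕ} {u v : Fin (2 * k)} :
    (sideG k).Adj u v ↔ u ≠ v ∧ ((u : ℕ) < k ↔ (v : ℕ) < k) := Iff.rfl

private def emb1 (k : ℕ) : Fin k ↪ Fin (2 * k) :=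
  ⟨fun i => ⟨(i : ℕ), by have := i.isLt; omega⟩,
   fun i j h => by simp only [Fin.mk.injEq] at h; exact Fin.ext h⟩

private def emb2 (k : ℕ) : Fin k ↪ Fin (2 * k) :=
  ⟨fun i => ⟨(i : ℕ) + k, by have := i.isLt; omega⟩,
   fun i j h => by simp only [Fin.mk.injEq] at h; exact Fin.ext (by omega)⟩

private lemma emb1_val {k : ℕ} (i : Fin k) : ((emb1 k i : Fin (2 * k)) : ℕ) = (i : ℕ) := rfl
private lemma emb2_val {k : ℕ} (i : Fin k) : ((emb2 k i : Fin (2 * k)) : ℕ) = (i : ℕ) + k := rfl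

private lemma fhat_exists (k : ℕ) (hk : 1 ≤ k) :
    ∃ (G : SimpleGraph (Fin (2 * k))) (c : Sym2 (Fin (2 * k)) → ℕ), FHat k G c := by
  obtain ⟨c, hc⟩ := Countable.exists_injective_nat (Sym2 (Fin (2 * k)))
  have hadj1 : ∀ i j : Fin k, i ≠ j → (sideG k).Adj (emb1 k i) (emb1 k j) := by
    intro i j hij
    refine ⟨(emb1 k).injective.ne hij, ?_⟩
    rw [emb1_val, emb1_val]
    exact ⟨fun _ => j.isLt, fun _ => i.isLt⟩
  have hadj2 : ∀ i j : Fin k, i ≠ j → (sideG k).Adj (emb2 k i) (emb2 k j) := by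
    intro i j hij
    refine ⟨(emb2 k).injective.ne hij, ?_⟩
    rw [emb2_val, emb2_val]
    constructor <;> (intro h; omega)
  have hrb1 : ∀ i j i' j' : Fin k, i ≠ j → i' ≠ j' →
      c s(emb1 k i, emb1 k j) = c s(emb1 k i', emb1 k j') → s(i, j) = s(i', j') :=
    fun i j i' j' _ _ hcc => (sym2_map_eq_iff' (emb1 k).injective).1 (hc hcc)
  have hrb2 : ∀ i j i' j' : Fin k, i ≠ j → i' ≠ j' →
      c s(emb2 k i, emb2 k j) = c s(emb2 k i', emb2 k j') → s(i, j) = s(i', j') :=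
    fun i j i' j' _ _ hcc => (sym2_map_eq_iff' (emb2 k).injective).1 (hc hcc)
  have hmix : ∀ i j i' j' : Fin k, s(emb2 k i, emb2 k j) ≠ s(emb1 k i', emb1 k j') := by
    intro i j i' j' hEq
    rw [Sym2.eq_iff] at hEq
    have h1 := i.isLt; have h2 := i'.isLt; have h3 := j'.isLt; have h4 := j.isLt
    rcases hEq with ⟨h5, -⟩ | ⟨h5, -⟩ <;>
      (have := congrArg Fin.val h5; rw [emb2_val, emb1_val] at this; omega)
  refine ⟨sideG k, c, ?_, ?_, ?_⟩
  · rintro ⟨f, -, hadj, -, -⟩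
    by_cases h0 : ((f 0 : Fin (2 * k)) : ℕ) < k
    · have hall : ∀ i, ((f i : Fin (2 * k)) : ℕ) < k := by
        intro i
        rcases eq_or_ne i 0 with rfl | hne
        · exact h0
        · exact (hadj i 0 hne).2.mpr h0
      have hinj : Function.Injective (fun i : Fin (k + 1) => (⟨(f i : ℕ), hall i⟩ : Fin k)) := by
        intro i j hEq
        simp only [Fin.mk.injEq] at hEq
        exact f.injective (Fin.ext hEq)
      have := Fintype.card_le_of_injective _ hinj
      simp only [Fintype.card_fin] at this
      omega
    · have hall : ∀ i, ¬ ((f i : Fin (2 * k)) : ℕ) < k := by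
        intro i
        rcases eq_or_ne i 0 with rfl | hne
        · exact h0
        · exact fun hlt => h0 ((hadj i 0 hne).2.mp hlt)
      have hinj : Function.Injective
          (fun i : Fin (k + 1) => (⟨(f i : ℕ) - k, by have := (f i).isLt; have := hall i; omega⟩ : Fin k)) := by
        intro i j hEq
        have h1 := hall i; have h2 := hall j
        simp only [Fin.mk.injEq] at hEq
        exact f.injective (Fin.ext (by omega))
      have := Fintype.card_le_of_injective _ hinj
      simp only [Fintype.card_fin] at this
      omega
  · intro v
    by_cases hv : (v : ℕ) < k
    · refine ⟨emb2 k, ?_, hadj2, fun _ _ _ => Set.notMem_empty _, hrb2⟩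
      intro i
      simp only [Set.mem_singleton_iff]
      intro hEq
      have := congrArg Fin.val hEq
      rw [emb2_val] at this
      omega
    · refine ⟨emb1 k, ?_, hadj1, fun _ _ _ => Set.notMem_empty _, hrb1⟩
      intro i
      simp only [Set.mem_singleton_iff]
      intro hEq
      have := congrArg Fin.val hEq
      rw [emb1_val] at this
      have := i.isLt
      omega
  · intro col
    by_cases hcol : ∃ i j : Fin k, i ≠ j ∧ c s(emb1 k i, emb1 k j) = col
    · refine ⟨emb2 k, fun _ => Set.notMem_empty _, hadj2, ?_, hrb2⟩
      intro i j hij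
      simp only [Set.mem_singleton_iff]
      intro hEq
      obtain ⟨i0, j0, -, h01⟩ := hcol
      exact hmix i j i0 j0 (hc (hEq.trans h01.symm))
    · refine ⟨emb1 k, fun _ => Set.notMem_empty _, hadj1, ?_, hrb1⟩
      intro i j hij
      simp only [Set.mem_singleton_iff]
      intro hEq
      exact hcol ⟨i, j, hij, hEq⟩

private lemma fhat_card_lb2 {V : Type} [Fintype V] {k : ℕ} (hk : 3 ≤ k)
    {G : SimpleGraph V} {c : Sym2 V → ℕ} (h : FHat k G c) :
    k + 2 ≤ Fintype.card V := by
  classical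
  by_contra hlt
  have hcard : Fintype.card V = k + 1 := by
    have := fhat_card_lb1 (by omega) h
    omega
  -- surjective rainbow cliques avoiding each vertex
  have key : ∀ v : V, ∃ g : Fin k ↪ V, (∀ u : V, u ≠ v → ∃ i, g i = u) ∧
      (∀ i j, i ≠ j → G.Adj (g i) (g j)) ∧
      (∀ i j i' j', i ≠ j → i' ≠ j' → c s(g i, g j) = c s(g i', g j') →
        s(i, j) = s(i', j')) := by
    intro v
    obtain ⟨g, hg1, hg2, -, hg4⟩ := h.2.1 v
    refine ⟨g, ?_, hg2, hg4⟩
    have hsub : Finset.univ.image (fun i => g i) ⊆ Finset.univ.erase v := by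
      intro z hz
      simp only [Finset.mem_image] at hz
      obtain ⟨i, -, rfl⟩ := hz
      exact Finset.mem_erase.2 ⟨fun h' => hg1 i (by simp [h']), Finset.mem_univ _⟩
    have heq : Finset.univ.image (fun i => g i) = Finset.univ.erase v := by
      apply Finset.eq_of_subset_of_card_le hsub
      rw [Finset.card_erase_of_mem (Finset.mem_univ v),
        Finset.card_image_of_injective _ g.injective, Finset.card_fin, Finset.card_univ, hcard]
      omega
    intro u hu
    have hmem : u ∈ Finset.univ.image (fun i => g i) := by
      rw [heq]; exact Finset.mem_erase.2 ⟨hu, Finset.mem_univ _⟩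
    simpa using hmem
  have color_aux : ∀ (v u w u' w' : V), u ≠ v → w ≠ v → u' ≠ v → w' ≠ v →
      u ≠ w → u' ≠ w' → c s(u, w) = c s(u', w') → s(u, w) = s(u', w') := by
    intro v u w u' w' hu hw hu' hw' huw hu'w' hcc
    obtain ⟨g, hsurj, -, hrb⟩ := key v
    obtain ⟨i, rfl⟩ := hsurj u hu
    obtain ⟨j, rfl⟩ := hsurj w hw
    obtain ⟨i', rfl⟩ := hsurj u' hu'
    obtain ⟨j', rfl⟩ := hsurj w' hw'
    have hidx := hrb i j i' j' (fun he => huw (by rw [he])) (fun he => hu'w' (by rw [he])) hcc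
    exact (sym2_map_eq_iff' g.injective).2 hidx
  have complete : ∀ u w : V, u ≠ w → G.Adj u w := by
    intro u w huw
    have h2 : ({u, w} : Finset V).card ≤ 2 :=
      (Finset.card_insert_le _ _).trans (by simp)
    have hss : ({u, w} : Finset V) ⊂ Finset.univ := by
      refine Finset.ssubset_univ_iff.2 fun hEq => ?_
      rw [hEq, Finset.card_univ, hcard] at h2
      omega
    obtain ⟨v, -, hv⟩ := Finset.exists_of_ssubset hss
    simp only [Finset.mem_insert, Finset.mem_singleton, not_or] at hv
    obtain ⟨g, hsurj, hadj, -⟩ := key v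
    obtain ⟨i, rfl⟩ := hsurj u (fun hE => hv.1 hE.symm)
    obtain ⟨j, rfl⟩ := hsurj w (fun hE => hv.2 hE.symm)
    exact hadj i j (fun hE => huw (by rw [hE]))
  obtain ⟨e⟩ : Nonempty (Fin (k + 1) ≃ V) := ⟨(Fintype.equivFinOfCardEq hcard).symm⟩
  have hP4 : ¬ (∀ i j i' j' : Fin (k + 1), i ≠ j → i' ≠ j' →
      c s(e i, e j) = c s(e i', e j') → s(i, j) = s(i', j')) := by
    intro hP4
    exact h.1 ⟨e.toEmbedding, fun _ => Set.notMem_empty _,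
      fun i j hij => complete _ _ (fun hE => hij (e.injective hE)),
      fun _ _ _ => Set.notMem_empty _, hP4⟩
  push_neg at hP4
  obtain ⟨i, j, i', j', hij, hij', hcc, hnidx⟩ := hP4
  have hmain : ∃ x y x' y' : V, x ≠ y ∧ x' ≠ y' ∧ s(x, y) ≠ s(x', y') ∧
      c s(x, y) = c s(x', y') :=
    ⟨e i, e j, e i', e j', fun hE => hij (e.injective hE), fun hE => hij' (e.injective hE),
      fun hE => hnidx ((sym2_map_eq_iff' e.injective).1 hE), hcc⟩
  obtain ⟨x, y, x', y', hxy, hx'y', hne', hceq⟩ := hmain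
  have hV : ∀ v : V, v = x ∨ v = y ∨ v = x' ∨ v = y' := by
    intro v
    by_contra hcon
    push_neg at hcon
    obtain ⟨h1, h2, h3, h4⟩ := hcon
    exact hne' (color_aux v x y x' y' (Ne.symm h1) (Ne.symm h2) (Ne.symm h3) (Ne.symm h4)
      hxy hx'y' hceq)
  have hfour : ∀ a b d : V, (∀ v : V, v = a ∨ v = b ∨ v = d) → False := by
    intro a b d hall
    have hsub : (Finset.univ : Finset V) ⊆ {a, b, d} := by
      intro v _
      rcases hall v with rfl | rfl | rfl <;> simp
    have hle := Finset.card_le_card hsub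
    have h3 : ({a, b, d} : Finset V).card ≤ 3 :=
      (Finset.card_insert_le _ _).trans (by
        have : ({b, d} : Finset V).card ≤ 2 := (Finset.card_insert_le _ _).trans (by simp)
        omega)
    rw [Finset.card_univ, hcard] at hle
    omega
  have hk3 : k = 3 := by
    by_contra hne4
    have hsub : (Finset.univ : Finset V) ⊆ {x, y, x', y'} := by
      intro v _
      rcases hV v with rfl | rfl | rfl | rfl <;> simp
    have hle := Finset.card_le_card hsub
    have h4 : ({x, y, x', y'} : Finset V).card ≤ 4 :=
      (Finset.card_insert_le _ _).trans (by
        have h3 : ({y, x', y'} : Finset V).card ≤ 3 :=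
          (Finset.card_insert_le _ _).trans (by
            have : ({x', y'} : Finset V).card ≤ 2 := (Finset.card_insert_le _ _).trans (by simp)
            omega)
        omega)
    rw [Finset.card_univ, hcard] at hle
    omega
  subst hk3
  -- the two edges are disjoint
  have hxx' : x ≠ x' := by
    rintro rfl
    exact hfour x y y' (fun v => by rcases hV v with h | h | h | h <;> tauto)
  have hxy' : x ≠ y' := by
    rintro rfl
    exact hfour x y x' (fun v => by rcases hV v with h | h | h | h <;> tauto)
  have hyx' : y ≠ x' := by
    rintro rfl
    exact hfour x y y' (fun v => by rcases hV v with h | h | h | h <;> tauto)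
  have hyy' : y ≠ y' := by
    rintro rfl
    exact hfour x y x' (fun v => by rcases hV v with h | h | h | h <;> tauto)
  -- condition (3) with the repeated color
  obtain ⟨f, -, -, hfC, -⟩ := h.2.2 (c s(x, y))
  have hpigeon : ∀ a b : V, (∀ i : Fin 3, f i = a ∨ f i = b) → False := by
    intro a b hall
    have himcard : (Finset.univ.image (fun i => f i)).card = 3 := by
      rw [Finset.card_image_of_injective _ f.injective, Finset.card_fin]
    have hsub : Finset.univ.image (fun i => f i) ⊆ {a, b} := by
      intro z hz
      simp only [Finset.mem_image] at hz
      obtain ⟨i, -, rfl⟩ := hz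
      rcases hall i with h' | h' <;> simp [h']
    have hle := Finset.card_le_card hsub
    have h2 : ({a, b} : Finset V).card ≤ 2 := (Finset.card_insert_le _ _).trans (by simp)
    omega
  have hfin : ∃ i j : Fin 3, i ≠ j ∧ c s(f i, f j) = c s(x, y) := by
    by_cases hx : (∃ i, f i = x) ∧ (∃ j, f j = y)
    · obtain ⟨⟨i, hi⟩, ⟨j, hj⟩⟩ := hx
      exact ⟨i, j, fun hE => hxy (by rw [← hi, ← hj, hE]), by rw [hi, hj]⟩
    · rw [not_and_or] at hx
      push_neg at hx
      have hx'r : ∃ i, f i = x' := by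
        by_contra hno
        push_neg at hno
        rcases hx with hA | hA
        · exact hpigeon y y' (fun i => by have := hV (f i); have := hA i; have := hno i; tauto)
        · exact hpigeon x y' (fun i => by have := hV (f i); have := hA i; have := hno i; tauto)
      have hy'r : ∃ j, f j = y' := by
        by_contra hno
        push_neg at hno
        rcases hx with hA | hA
        · exact hpigeon y x' (fun i => by have := hV (f i); have := hA i; have := hno i; tauto)
        · exact hpigeon x x' (fun i => by have := hV (f i); have := hA i; have := hno i; tauto)
      obtain ⟨i, hi⟩ := hx'r
      obtain ⟨j, hj⟩ := hy'r
      exact ⟨i, j, fun hE => hx'y' (by rw [← hi, ← hj, hE]), by rw [hi, hj, ← hceq]⟩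
  obtain ⟨i, j, hij, hcol⟩ := hfin
  exact hfC i j hij (by rw [hcol]; exact Set.mem_singleton _)

end FFAux

/-- Every edge-colored graph in `F̂_k` has at least `k+1` vertices
(`f(k) ≥ k+1`) for `k ≥ 1`, and at least `k+2` vertices (`f(k) ≥ k+2`) for `k ≥ 3`. -/
theorem fF_lower_bounds :
    (∀ k : ℕ, 1 ≤ k → ∀ (V : Type) [Fintype V],
      ∀ (G : SimpleGraph V) (c : Sym2 V → ℕ), FHat k G c → k + 1 ≤ Fintype.card V) ∧
    (∀ k : ℕ, 1 ≤ k → k + 1 ≤ fF k) ∧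
    (∀ k : ℕ, 3 ≤ k → ∀ (V : Type) [Fintype V],
      ∀ (G : SimpleGraph V) (c : Sym2 V → ℕ), FHat k G c → k + 2 ≤ Fintype.card V) ∧
    (∀ k : ℕ, 3 ≤ k → k + 2 ≤ fF k) := by
  refine ⟨fun k hk V _ G c h => fhat_card_lb1 hk h, ?_, fun k hk V _ G c h => fhat_card_lb2 hk h, ?_⟩
  · intro k hk
    have hne : {m | ∃ (G : SimpleGraph (Fin m)) (c : Sym2 (Fin m) → ℕ), FHat k G c}.Nonempty :=
      ⟨2 * k, fhat_exists k hk⟩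
    obtain ⟨G, c, hGc⟩ : ∃ (G : SimpleGraph (Fin (fF k))) (c : Sym2 (Fin (fF k)) → ℕ),
        FHat k G c := Nat.sInf_mem hne
    have := fhat_card_lb1 hk hGc
    simpa using this
  · intro k hk
    have hne : {m | ∃ (G : SimpleGraph (Fin m)) (c : Sym2 (Fin m) → ℕ), FHat k G c}.Nonempty :=
      ⟨2 * k, fhat_exists k (by omega)⟩
    obtain ⟨G, c, hGc⟩ : ∃ (G : SimpleGraph (Fin (fF k))) (c : Sym2 (Fin (fF k)) → ℕ),
        FHat k G c := Nat.sInf_mem hne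
    have := fhat_card_lb2 hk hGc
    simpa using this
end

section
/- For all graphs H and G: if R(G) is R(H)-semisaturated, then G is (H,1)-semisaturated. In particular, if R(G) is R(H)-saturated, then G is (H,1)-saturated. -/
open SimpleGraph

variable {V : Type*} {W : Type*}

private lemma addColor_ne {V : Type} (c : Sym2 V → ℕ) (e : Sym2 V) (col : ℕ)
    {e' : Sym2 V} (h : e' ≠ e) : addColor c e col e' = c e' := by
  exact @Function.update_of_ne (Sym2 V) (fun _ => ℕ)
    (fun a b => @Sym2.instDecidableEq V (fun a b => Classical.propDecidable (a = b)) a b)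
    _ _ h col c

private lemma addColor_self {V : Type} (c : Sym2 V → ℕ) (e : Sym2 V) (col : ℕ) :
    addColor c e col e = col := by
  exact @Function.update_self (Sym2 V) (fun _ => ℕ)
    (fun a b => @Sym2.instDecidableEq V (fun a b => Classical.propDecidable (a = b)) a b)
    e col c

private lemma sym2_map_eq {V W : Type} {f : W ↪ V} {a b a' b' : W}
    (h : s(a, b) = s(a', b')) : s(f a, f b) = s(f a', f b') := by
  have := congrArg (Sym2.map f) h
  simpa using this

private lemma pert1_of_rsemisat {V W : Type} (G : SimpleGraph V) (H : SimpleGraph W)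
    (c : Sym2 V → ℕ) (h : RSemiSat G c H) : Pert1 G H := by
  intro e he e₁ e₂ hne hd1 hd2 hm1 hm2
  have key : ∀ e' : Sym2 V, e' ∈ ({e₁, e₂} : Set (Sym2 V)) → ¬ e'.IsDiag →
      e' ∉ G.edgeSet → e' ≠ e →
      HasCopyOn (G.deleteEdges {e} ⊔ fromEdgeSet {e₁, e₂}) H e' := by
    intro e'
    induction e' using Sym2.ind with
    | _ u v =>
    intro hmem hd hnG hnee
    have huv : u ≠ v := by simpa using hd
    have hnadj : ¬ G.Adj u v := fun h' => hnG ((G.mem_edgeSet).mpr h')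
    obtain ⟨f, hH, ⟨a, b, hab, hfab⟩, hrb⟩ := h u v huv hnadj (c e)
    refine ⟨f, ?_, ⟨a, b, hab, hfab⟩⟩
    have havoid : ∀ a' b', H.Adj a' b' → s(f a', f b') ≠ e := by
      intro a' b' hab' hEq
      have h1 : addColor c s(u, v) (c e) s(f a, f b) = c e := by
        rw [hfab]; exact addColor_self c _ _
      have h2 : addColor c s(u, v) (c e) s(f a', f b') = c e := by
        rw [hEq]; exact addColor_ne c _ _ (Ne.symm hnee)
      have heq := hrb a b a' b' hab hab' (h1.trans h2.symm)
      have heq2 := sym2_map_eq (f := f) heq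
      apply hnee
      rw [← hfab, heq2, hEq]
    intro a' b' hab'
    rcases hH a' b' hab' with hg | hg
    · left
      rw [deleteEdges_adj]
      exact ⟨hg, by simpa using havoid a' b' hab'⟩
    · rw [fromEdgeSet_adj] at hg
      refine Or.inr ((fromEdgeSet_adj _).mpr ⟨?_, hg.2⟩)
      have : s(f a', f b') = s(u, v) := by simpa using hg.1
      rw [this]
      exact hmem
  rw [edgeSet_deleteEdges] at hm1 hm2
  by_cases h1e : e₁ = e
  · have h2e : e₂ ≠ e := fun h' => hne (h1e.trans h'.symm)
    have h2G : e₂ ∉ G.edgeSet := fun h' => by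
      exact hm2 ⟨h', by simpa using h2e⟩
    exact Or.inr (key e₂ (by simp) hd2 h2G h2e)
  · have h1G : e₁ ∉ G.edgeSet := fun h' => by
      exact hm1 ⟨h', by simpa using h1e⟩
    exact Or.inl (key e₁ (by simp) hd1 h1G h1e)

private lemma rsemisat_of_rsat {V W : Type} (G : SimpleGraph V) (H : SimpleGraph W)
    (c : Sym2 V → ℕ) (h : RSat G c H) : RSemiSat G c H := by
  intro u v huv hadj col
  obtain ⟨hno, hsat⟩ := h
  obtain ⟨f, hH, hrb⟩ := hsat u v huv hadj col
  by_cases hu : ∃ a b, H.Adj a b ∧ s(f a, f b) = s(u, v)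
  · exact ⟨f, hH, hu, hrb⟩
  · exfalso
    push_neg at hu
    apply hno
    refine ⟨f, ?_, ?_⟩
    · intro a b hab
      rcases hH a b hab with h' | h'
      · exact h'
      · rw [fromEdgeSet_adj] at h'
        exact absurd (by simpa using h'.1) (hu a b hab)
    · intro a b a' b' hab hab' hcc
      refine hrb a b a' b' hab hab' ?_
      rw [addColor_ne c _ _ (hu a b hab), addColor_ne c _ _ (hu a' b' hab')]
      exact hcc

/-- If `R(G)` (i.e. `G` with an edge-coloring that is injective on its
edges) is `R(H)`-semisaturated, then `G` is `(H,1)`-semisaturated; in particular if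
`R(G)` is `R(H)`-saturated then `G` is `(H,1)`-saturated. -/
theorem rainbow_saturated_implies_one_saturated {V W : Type} [Fintype V] [Fintype W]
    (G : SimpleGraph V) (H : SimpleGraph W) (c : Sym2 V → ℕ)
    (hc : Set.InjOn c G.edgeSet) :
    (RSemiSat G c H → SemiSat1 G H) ∧ (RSat G c H → Sat1 G H) := by
  constructor
  · intro h
    refine ⟨?_, pert1_of_rsemisat G H c h⟩
    intro u v huv hadj
    obtain ⟨f, h1, h2, _⟩ := h u v huv hadj 0
    exact ⟨f, h1, h2⟩
  · intro h
    have hs := rsemisat_of_rsat G H c h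
    refine ⟨⟨?_, fun u v huv hadj => ?_⟩, pert1_of_rsemisat G H c hs⟩
    · rintro ⟨f, hH⟩
      apply h.1
      refine ⟨f, hH, ?_⟩
      intro a b a' b' hab hab' hcc
      have h1 : s(f a, f b) ∈ G.edgeSet := (G.mem_edgeSet).mpr (hH a b hab)
      have h2 : s(f a', f b') ∈ G.edgeSet := (G.mem_edgeSet).mpr (hH a' b' hab')
      have := hc h1 h2 hcc
      rw [Sym2.eq_iff] at this ⊢
      rcases this with ⟨p, q⟩ | ⟨p, q⟩
      · exact Or.inl ⟨f.injective p, f.injective q⟩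
      · exact Or.inr ⟨f.injective p, f.injective q⟩
    · obtain ⟨f, h1, _⟩ := h.2 u v huv hadj 0
      exact ⟨f, h1⟩
end

section
/- Given positive integers k and ℓ and a positive real number ε, there is a positive integer N such that for every n ≥ N, every n-vertex simple graph G with at most (k+1−ε)n edges, and every family F of k-vertex graphs, at least one of the following holds for some subset S ⊆ V(G) of size k: (1) there is an independent set X in G−S of size at least ℓ and a vertex v ∈ X such that for every w ∈ X∖{v}, N(v) ∩ N(w) ⊆ S and the induced subgraph G[N(v) ∩ N(w)] is not isomorphic to any graph in F; or (2) S is complete to V(G)∖S and G[S] is isomorphic to a graph in F. -/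
open SimpleGraph

variable {V : Type*} {W : Type*}

open Finset

/-- Greedy independent set in a set of vertices of bounded degree. -/
lemma indep_aux {n : ℕ} (G : SimpleGraph (Fin n)) [DecidableRel G.Adj] (d : ℕ) :
    ∀ (s : ℕ) (Y : Finset (Fin n)), (∀ y ∈ Y, G.degree y ≤ d) → s * (d + 1) ≤ Y.card →
    ∃ X ⊆ Y, X.card = s ∧ ∀ x ∈ X, ∀ y ∈ X, ¬ G.Adj x y := by
  intro s
  induction s with
  | zero => intro Y _ _; exact ⟨∅, by simp⟩
  | succ s ih =>
    intro Y hdeg hcard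
    have hpos : 0 < Y.card := lt_of_lt_of_le (by positivity) hcard
    obtain ⟨y₀, hy₀⟩ := Finset.card_pos.1 hpos
    set B := insert y₀ (G.neighborFinset y₀) with hB
    have hBcard : B.card ≤ d + 1 := by
      refine le_trans (Finset.card_insert_le _ _) ?_
      simp only [card_neighborFinset_eq_degree]
      have := hdeg y₀ hy₀
      omega
    have hY' : s * (d + 1) ≤ (Y \ B).card := by
      have h1 : Y.card ≤ (Y \ B).card + B.card := Finset.card_le_card_sdiff_add_card
      have := hcard
      have : (s+1) * (d+1) = s*(d+1) + (d+1) := by ring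
      omega
    obtain ⟨X', hX'sub, hX'card, hX'indep⟩ := ih (Y \ B) (fun y hy => hdeg y (Finset.mem_sdiff.1 hy).1) hY'
    have hy₀X' : y₀ ∉ X' := fun h => (Finset.mem_sdiff.1 (hX'sub h)).2 (Finset.mem_insert_self _ _)
    refine ⟨insert y₀ X', ?_, ?_, ?_⟩
    · intro x hx
      rcases Finset.mem_insert.1 hx with rfl | hx
      · exact hy₀
      · exact (Finset.mem_sdiff.1 (hX'sub hx)).1
    · rw [Finset.card_insert_of_notMem hy₀X', hX'card]
    · intro x hx y hy
      rcases Finset.mem_insert.1 hx with hx0 | hx1 <;> rcases Finset.mem_insert.1 hy with hy0 | hy1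
      · subst hx0; subst hy0; exact G.loopless.irrefl _
      · subst hx0
        intro hadj
        exact (Finset.mem_sdiff.1 (hX'sub hy1)).2
          (Finset.mem_insert_of_mem ((G.mem_neighborFinset _ _).2 hadj))
      · subst hy0
        intro hadj
        exact (Finset.mem_sdiff.1 (hX'sub hx1)).2
          (Finset.mem_insert_of_mem ((G.mem_neighborFinset _ _).2 hadj.symm))
      · exact hX'indep x hx1 y hy1

/-- real Markov on degrees -/
lemma markov_aux {n : ℕ} (G : SimpleGraph (Fin n)) [DecidableRel G.Adj] (t : ℝ)
    (P : Fin n → Prop) [DecidablePred P] (hP : ∀ v, P v → t ≤ (G.degree v : ℝ)) :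
    ((univ.filter P).card : ℝ) * t ≤ 2 * G.edgeFinset.card := by
  have h1 : ((univ.filter P).card : ℝ) * t ≤ ∑ v ∈ univ.filter P, (G.degree v : ℝ) := by
    rw [← nsmul_eq_mul]
    exact Finset.card_nsmul_le_sum _ _ _ (fun v hv => hP v (Finset.mem_filter.1 hv).2)
  have h2 : ∑ v ∈ univ.filter P, (G.degree v : ℝ) ≤ ∑ v, (G.degree v : ℝ) :=
    Finset.sum_le_sum_of_subset_of_nonneg (Finset.filter_subset _ _) (fun _ _ _ => by positivity)
  have h3 : ∑ v, (G.degree v : ℝ) = 2 * G.edgeFinset.card := by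
    rw [← Nat.cast_sum]
    rw [G.sum_degrees_eq_twice_card_edges]
    push_cast; ring
  linarith

/-- iso to a graph on `Fin k` forces ncard `k` -/
lemma iso_ncard_aux {n k : ℕ} (G : SimpleGraph (Fin n)) (s : Set (Fin n))
    (H : SimpleGraph (Fin k)) (h : Nonempty ((G.induce s) ≃g H)) : s.ncard = k := by
  obtain ⟨e⟩ := h
  have h2 : Nat.card s = k := by simpa using Nat.card_congr e.toEquiv
  rw [← Nat.card_coe_set_eq, h2]


lemma bipcount {n : ℕ} (G : SimpleGraph (Fin n)) [DecidableRel G.Adj]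
    (B MB : Finset (Fin n)) (E : Finset (Sym2 (Fin n)))
    (hdisj : ∀ v ∈ B, v ∉ MB)
    (hE : ∀ v ∈ B, ∀ u ∈ MB, G.Adj v u → s(v, u) ∈ E) (t : ℕ)
    (hB : ∀ v ∈ B, t ≤ (MB.filter (fun u => G.Adj v u)).card) :
    t * B.card ≤ E.card := by
  classical
  set J : Finset (Fin n × Fin n) := (B ×ˢ MB).filter (fun p => G.Adj p.1 p.2) with hJ
  have hJB : ∀ p ∈ J, p.1 ∈ B := by
    intro p hp
    exact (Finset.mem_product.1 (Finset.mem_filter.1 hp).1).1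
  have hcard : J.card = ∑ v ∈ B, (J.filter (fun p => p.1 = v)).card :=
    Finset.card_eq_sum_card_fiberwise hJB
  have hfiber : ∀ v ∈ B, t ≤ (J.filter (fun p => p.1 = v)).card := by
    intro v hv
    refine le_trans (hB v hv) (Finset.card_le_card_of_injOn (fun u => (v, u)) ?_ ?_)
    · intro u hu
      have hu' := Finset.mem_filter.1 hu
      exact Finset.mem_filter.2
        ⟨Finset.mem_filter.2 ⟨Finset.mem_product.2 ⟨hv, hu'.1⟩, hu'.2⟩, rfl⟩
    · intro a _ b _ h
      exact congrArg Prod.snd h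
  have h1 : t * B.card ≤ J.card := by
    rw [hcard]
    calc t * B.card = ∑ _v ∈ B, t := by rw [Finset.sum_const, smul_eq_mul, mul_comm]
    _ ≤ _ := Finset.sum_le_sum hfiber
  refine le_trans h1 (Finset.card_le_card_of_injOn (fun p => s(p.1, p.2)) ?_ ?_)
  · intro p hp
    have hp' := Finset.mem_filter.1 hp
    have hpr := Finset.mem_product.1 hp'.1
    exact hE p.1 hpr.1 p.2 hpr.2 hp'.2
  · intro p hp q hq h
    have hp' := Finset.mem_product.1 (Finset.mem_filter.1 hp).1
    have hq' := Finset.mem_product.1 (Finset.mem_filter.1 hq).1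
    rcases Sym2.eq_iff.1 h with ⟨h1, h2⟩ | ⟨h1, h2⟩
    · exact Prod.ext h1 h2
    · exact absurd (h1 ▸ hq'.2) (hdisj p.1 hp'.1)


lemma cover_bound {n : ℕ} (G : SimpleGraph (Fin n)) [DecidableRel G.Adj]
    (S : Finset (Fin n)) (u₀ : Fin n) (hu₀S : u₀ ∉ S)
    (E₀ : Finset (Sym2 (Fin n)))
    (hE₀ : ∀ a b : Fin n, G.Adj a b → a ∉ S → b ∉ S → s(a, b) ∈ E₀) :
    ∀ (N' D2 : Finset (Fin n)),
    (∀ z ∈ N', z ∉ S ∧ G.Adj u₀ z) →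
    (∀ z ∈ D2, z ∉ S ∧ (¬ G.Adj u₀ z → ∃ u, u ∉ S ∧ G.Adj u₀ u ∧ G.Adj u z)) →
    ((N' ∪ D2).erase u₀).card ≤ E₀.card := by
  classical
  intro N' D2 hN' hD2
  set f : Fin n → Sym2 (Fin n) := fun z =>
    if G.Adj u₀ z then s(u₀, z)
    else if h2 : ∃ u, u ∉ S ∧ G.Adj u₀ u ∧ G.Adj u z then s(z, h2.choose) else s(z, z) with hf
  have hzS : ∀ z ∈ (N' ∪ D2).erase u₀, z ∉ S := by
    intro z hz
    rcases Finset.mem_union.1 (Finset.mem_of_mem_erase hz) with h | h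
    · exact (hN' z h).1
    · exact (hD2 z h).1
  have hex : ∀ z ∈ (N' ∪ D2).erase u₀, ¬ G.Adj u₀ z →
      ∃ u, u ∉ S ∧ G.Adj u₀ u ∧ G.Adj u z := by
    intro z hz hna
    rcases Finset.mem_union.1 (Finset.mem_of_mem_erase hz) with h | h
    · exact absurd (hN' z h).2 hna
    · exact (hD2 z h).2 hna
  refine Finset.card_le_card_of_injOn f ?_ ?_
  · intro z hz
    by_cases h : G.Adj u₀ z
    · rw [hf]; simp only [if_pos h]
      exact hE₀ u₀ z h hu₀S (hzS z hz)
    · have h2 := hex z hz h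
      rw [hf]; simp only [if_neg h, dif_pos h2]
      obtain ⟨hu1, hu2, hu3⟩ := h2.choose_spec
      exact hE₀ z h2.choose hu3.symm (hzS z hz) hu1
  · intro z₁ hz₁ z₂ hz₂ heq
    have hz₁u : z₁ ≠ u₀ := Finset.ne_of_mem_erase hz₁
    have hz₂u : z₂ ≠ u₀ := Finset.ne_of_mem_erase hz₂
    by_cases h1 : G.Adj u₀ z₁ <;> by_cases h2 : G.Adj u₀ z₂
    · rw [hf] at heq; simp only [if_pos h1, if_pos h2] at heq
      rcases Sym2.eq_iff.1 heq with ⟨_, h⟩ | ⟨ha, hb⟩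
      · exact h
      · exact absurd hb hz₁u
    · have he2 := hex z₂ hz₂ h2
      rw [hf] at heq; simp only [if_pos h1, if_neg h2, dif_pos he2] at heq
      obtain ⟨hu1, hu2, hu3⟩ := he2.choose_spec
      rcases Sym2.eq_iff.1 heq with ⟨ha, hb⟩ | ⟨ha, hb⟩
      · exact absurd ha.symm hz₂u
      · exact hb
    · have he1 := hex z₁ hz₁ h1
      rw [hf] at heq; simp only [if_pos h2, if_neg h1, dif_pos he1] at heq
      obtain ⟨hu1, hu2, hu3⟩ := he1.choose_spec
      rcases Sym2.eq_iff.1 heq with ⟨ha, hb⟩ | ⟨ha, hb⟩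
      · exact absurd ha hz₁u
      · exact ha
    · have he1 := hex z₁ hz₁ h1
      have he2 := hex z₂ hz₂ h2
      rw [hf] at heq; simp only [if_neg h1, if_neg h2, dif_pos he1, dif_pos he2] at heq
      obtain ⟨hu1, hu2, hu3⟩ := he1.choose_spec
      obtain ⟨hv1, hv2, hv3⟩ := he2.choose_spec
      rcases Sym2.eq_iff.1 heq with ⟨ha, hb⟩ | ⟨ha, hb⟩
      · exact ha
      · rw [← ha] at hv2; exact absurd hv2 h1



set_option maxHeartbeats 4000000 in
/-- The central structural lemma. -/
theorem central_lemma (k l : ℕ) (hk : 0 < k) (hl : 0 < l) (eps : ℝ) (heps : 0 < eps) :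
    ∃ N : ℕ, 0 < N ∧ ∀ n : ℕ, N ≤ n → ∀ G : SimpleGraph (Fin n),
      (G.edgeSet.ncard : ℝ) ≤ ((k : ℝ) + 1 - eps) * n →
      ∀ F : Set (SimpleGraph (Fin k)),
      ∃ S : Finset (Fin n), S.card = k ∧
        ((∃ X : Finset (Fin n), (∀ x ∈ X, x ∉ S) ∧ l ≤ X.card ∧
            (∀ x ∈ X, ∀ y ∈ X, ¬ G.Adj x y) ∧
            ∃ v ∈ X, ∀ w ∈ X, w ≠ v →
              (G.neighborSet v ∩ G.neighborSet w ⊆ (↑S : Set (Fin n))) ∧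
              ¬ ∃ H ∈ F, Nonempty
                ((G.induce (G.neighborSet v ∩ G.neighborSet w)) ≃g H)) ∨
          ((∀ s ∈ S, ∀ v : Fin n, v ∉ S → G.Adj s v) ∧
            ∃ H ∈ F, Nonempty ((G.induce (↑S : Set (Fin n))) ≃g H))) := by
  classical
  -- constants
  obtain ⟨K, hKdef⟩ : ∃ K : ℝ, K = (k : ℝ) + 1 := ⟨_, rfl⟩
  have hK2 : 2 ≤ K := by
    have : (1:ℝ) ≤ (k:ℝ) := by exact_mod_cast hk
    simp [hKdef]; linarith
  have hK0 : 0 < K := by linarith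
  obtain ⟨e0, he0def⟩ : ∃ e0 : ℝ, e0 = min eps 1 := ⟨_, rfl⟩
  have he0 : 0 < e0 := he0def ▸ lt_min heps one_pos
  have he01 : e0 ≤ 1 := he0def ▸ min_le_right _ _
  have he0eps : e0 ≤ eps := he0def ▸ min_le_left _ _
  obtain ⟨δ, hδdef⟩ : ∃ δ : ℝ, δ = e0 / (8 * K ^ 2) := ⟨_, rfl⟩
  have hδ : 0 < δ := by rw [hδdef]; positivity
  have hδ32 : δ ≤ e0 / 32 := by
    rw [hδdef]
    exact div_le_div_of_nonneg_left he0.le (by norm_num) (by nlinarith)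
  have hδ1 : δ ≤ 1 := by linarith
  obtain ⟨d1, hd1def⟩ : ∃ d1 : ℕ, d1 = ⌈8 * K / δ⌉₊ := ⟨_, rfl⟩
  have hd1 : 8 * K / δ ≤ d1 := hd1def ▸ Nat.le_ceil _
  have hd1pos : (0:ℝ) < d1 := lt_of_lt_of_le (by positivity) hd1
  obtain ⟨θ, hθdef⟩ : ∃ θ : ℝ, θ = δ / (8 * ((d1 : ℝ) + 1)) := ⟨_, rfl⟩
  have hθ : 0 < θ := by rw [hθdef]; positivity
  have hd1θ : (d1 : ℝ) * θ ≤ δ / 8 := by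
    have hne : ((d1:ℝ) + 1) ≠ 0 := by positivity
    calc (d1:ℝ) * θ ≤ ((d1:ℝ) + 1) * θ := by nlinarith [hθ.le]
    _ = δ / 8 := by rw [hθdef]; field_simp
  obtain ⟨h₀, hh₀def⟩ : ∃ h₀ : ℝ, h₀ = 2 * K / θ := ⟨_, rfl⟩
  have hh₀ : 0 < h₀ := by rw [hh₀def]; positivity
  have hδ2K : δ ≤ e0 / (2 * K) := by
    rw [hδdef]
    exact div_le_div_of_nonneg_left he0.le (by positivity) (by nlinarith)
  have hfrac : e0 / (2 * K) ≤ e0 / K - δ / 4 := by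
    have he2 : e0 / K = e0 / (2 * K) + e0 / (2 * K) := by field_simp; ring
    linarith only [hδ2K, he2, hδ.le]
  have hkδ : (k : ℝ) * δ ≤ e0 / 16 := by
    have hkK : (k:ℝ) ≤ K := by rw [hKdef]; linarith
    have h1 : (k:ℝ) * δ ≤ K * δ := mul_le_mul_of_nonneg_right hkK hδ.le
    have h2 : K * δ = e0 / (8 * K) := by
      rw [hδdef]; field_simp
    have h3 : e0 / (8 * K) ≤ e0 / 16 :=
      div_le_div_of_nonneg_left he0.le (by norm_num) (by linarith)
    linarith only [h1, h2, h3]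
  -- the threshold N
  obtain ⟨C1, hC1def⟩ : ∃ C : ℝ, C = (h₀ + 1) * 2 * K / e0 := ⟨_, rfl⟩
  obtain ⟨C2, hC2def⟩ : ∃ C : ℝ, C = 8 * (1 + (d1:ℝ)) / δ := ⟨_, rfl⟩
  obtain ⟨C3, hC3def⟩ : ∃ C : ℝ, C = 2 * (l:ℝ) * ((d1:ℝ) + 1) / δ := ⟨_, rfl⟩
  obtain ⟨C5, hC5def⟩ : ∃ C : ℝ, C = 8 * (k:ℝ) ^ 2 / e0 + 1 := ⟨_, rfl⟩
  obtain ⟨C6, hC6def⟩ : ∃ C : ℝ, C = 32 * ((k:ℝ) + 1) / e0 := ⟨_, rfl⟩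
  obtain ⟨C7, hC7def⟩ : ∃ C : ℝ, C = 8 * (l:ℝ) * ((d1:ℝ) + 1) / e0 := ⟨_, rfl⟩
  refine ⟨l + 2 * k + 1 + ⌈C1⌉₊ + ⌈C2⌉₊ + ⌈C3⌉₊ + ⌈C5⌉₊ + ⌈C6⌉₊ + ⌈C7⌉₊, by positivity, ?_⟩
  intro n hn G hG F
  haveI : DecidableRel G.Adj := Classical.decRel _
  have hnk : l + 2 * k + 1 ≤ n := by omega
  have hCle : ∀ C : ℝ, ⌈C⌉₊ ≤ n → C ≤ n := fun C h =>
    le_trans (Nat.le_ceil C) (by exact_mod_cast h)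
  have hnC1 : C1 ≤ n := hCle C1 (by omega)
  have hnC2 : C2 ≤ n := hCle C2 (by omega)
  have hnC3 : C3 ≤ n := hCle C3 (by omega)
  have hnC5 : C5 ≤ n := hCle C5 (by omega)
  have hnC6 : C6 ≤ n := hCle C6 (by omega)
  have hnC7 : C7 ≤ n := hCle C7 (by omega)
  have hn0 : (0:ℝ) < n := by
    have : 1 ≤ n := by omega
    exact_mod_cast Nat.lt_of_lt_of_le Nat.zero_lt_one this
  set m : ℕ := G.edgeFinset.card with hmdef
  have hm : (m : ℝ) ≤ (K - e0) * n := by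
    rw [← coe_edgeFinset, Set.ncard_coe_finset] at hG
    refine le_trans hG (mul_le_mul_of_nonneg_right (by simp [hKdef]; linarith) hn0.le)
  have hmK : (m : ℝ) ≤ K * n := by
    have h1 : 0 ≤ e0 * n := by positivity
    linarith only [hm, h1]
  -- the main finsets
  set MB : Finset (Fin n) := univ.filter (fun u => θ * n ≤ (G.degree u : ℝ)) with hMBdef
  set B2 : Finset (Fin n) := univ.filter (fun v => d1 + 1 ≤ G.degree v) with hB2def
  set P : Fin n → Finset (Fin n) := fun v => MB.filter (fun u => G.Adj v u) with hPdef
  set B1 : Finset (Fin n) := univ.filter (fun v => k + 1 ≤ (P v).card) with hB1def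
  set A : Finset (Fin n) := univ \ (B1 ∪ B2) with hAdef
  have hMBc : (MB.card : ℝ) ≤ h₀ := by
    have h := markov_aux G (θ * n) (fun u => θ * n ≤ (G.degree u : ℝ)) (fun v hv => hv)
    rw [← hMBdef, ← hmdef] at h
    have h2 : (MB.card : ℝ) * θ * n ≤ (2 * K) * n := by
      calc (MB.card : ℝ) * θ * n = (MB.card : ℝ) * (θ * n) := by ring
      _ ≤ 2 * m := h
      _ ≤ (2 * K) * n := by linarith
    have h3 : (MB.card : ℝ) * θ ≤ 2 * K := le_of_mul_le_mul_right h2 hn0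
    rw [hh₀def, le_div_iff₀ hθ]
    exact h3
  have hB2c : (B2.card : ℝ) ≤ δ * n / 4 := by
    have h := markov_aux G ((d1 : ℝ) + 1) (fun v => d1 + 1 ≤ G.degree v)
      (fun v hv => by exact_mod_cast hv)
    rw [← hB2def, ← hmdef] at h
    have hd1' : 8 * K / δ ≤ (d1 : ℝ) + 1 := by linarith
    have h2 : (B2.card : ℝ) * (8 * K / δ) ≤ 2 * K * n := by
      calc (B2.card : ℝ) * (8 * K / δ) ≤ (B2.card : ℝ) * ((d1:ℝ) + 1) :=
            mul_le_mul_of_nonneg_left hd1' (Nat.cast_nonneg _)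
      _ ≤ 2 * m := h
      _ ≤ 2 * K * n := by linarith
    have hpos : (0:ℝ) < 8 * K / δ := by positivity
    rw [show δ * n / 4 = (2 * K * n) / (8 * K / δ) by field_simp; ring]
    exact (le_div_iff₀ hpos).2 h2
  have hB1MBc : (K : ℝ) * ((B1 \ MB).card) ≤ m := by
    have h := bipcount G (B1 \ MB) MB G.edgeFinset
      (fun v hv => (Finset.mem_sdiff.1 hv).2)
      (fun v _ u _ hadj => by rw [SimpleGraph.mem_edgeFinset]; exact hadj) (k + 1)
      (fun v hv => by
        have := (Finset.mem_filter.1 (Finset.mem_sdiff.1 hv).1).2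
        rw [hPdef] at this
        exact this)
    rw [← hmdef] at h
    calc K * ((B1 \ MB).card) = ((k + 1 : ℕ) : ℝ) * ((B1 \ MB).card) := by
          push_cast [hKdef]; try ring
    _ ≤ m := by exact_mod_cast h
  have hB1c : (B1.card : ℝ) ≤ (1 - e0 / K) * n + h₀ := by
    have hsplit : B1.card ≤ (B1 \ MB).card + MB.card := Finset.card_le_card_sdiff_add_card
    have h1 : ((B1 \ MB).card : ℝ) ≤ (1 - e0 / K) * n := by
      have hKne : K ≠ 0 := ne_of_gt hK0
      rw [← mul_le_mul_iff_right₀ hK0]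
      calc K * ((B1 \ MB).card) ≤ m := hB1MBc
      _ ≤ (K - e0) * n := hm
      _ = K * ((1 - e0 / K) * n) := by field_simp
    have h2 : ((B1.card : ℝ)) ≤ ((B1 \ MB).card : ℝ) + MB.card := by exact_mod_cast hsplit
    linarith
  have hAcard : (1 : ℝ) ≤ A.card := by
    have h1 : (univ : Finset (Fin n)).card ≤ A.card + (B1 ∪ B2).card :=
      Finset.card_le_card_sdiff_add_card
    have h2 : (B1 ∪ B2).card ≤ B1.card + B2.card := Finset.card_union_le _ _
    have h4 : (n : ℝ) ≤ (A.card : ℝ) + ((B1.card : ℝ) + B2.card) := by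
      have := le_trans h1 (by omega : A.card + (B1 ∪ B2).card ≤ A.card + (B1.card + B2.card))
      calc (n : ℝ) = ((univ : Finset (Fin n)).card : ℝ) := by simp
      _ ≤ _ := by exact_mod_cast this
    have hC1' : h₀ + 1 ≤ e0 / (2 * K) * n := by
      rw [hC1def] at hnC1
      rw [div_le_iff₀ he0] at hnC1
      rw [div_mul_eq_mul_div, le_div_iff₀ (by positivity : (0:ℝ) < 2 * K)]
      linarith only [hnC1]
    have hmul : e0 / (2 * K) * n ≤ (e0 / K - δ / 4) * n :=
      mul_le_mul_of_nonneg_right hfrac hn0.le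
    have hexp : (e0 / K - δ / 4) * n = (e0 / K) * n - δ * n / 4 := by ring
    have hexp2 : (1 - e0 / K) * n = n - (e0 / K) * n := by ring
    linarith only [h4, hB1c, hB2c, hC1', hmul, hexp, hexp2]
  have hAne : A.Nonempty := by
    rw [← Finset.card_pos]
    have : 1 ≤ A.card := by exact_mod_cast hAcard
    omega
  set W : Fin n → Finset (Fin n) := fun v => univ.filter (fun w => ∀ z ∈ P v, G.Adj w z)
    with hWdef
  by_cases hall : ∀ v ∈ A, (P v).card = k ∧
      (∃ H ∈ F, Nonempty ((G.induce ((P v : Finset (Fin n)) : Set (Fin n))) ≃g H)) ∧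
      ((1 - δ) * n ≤ ((W v).card : ℝ))
  · -- CASE 2 : every vertex of A is blocked
    obtain ⟨vs, hvsA⟩ := hAne
    obtain ⟨hPk, hFiso, hWc⟩ := hall vs hvsA
    set S : Finset (Fin n) := P vs with hSdef
    by_cases hcomp : ∀ u : Fin n, u ∉ S → ∀ z ∈ S, G.Adj z u
    · exact ⟨S, hPk, Or.inr ⟨fun s hs u hu => hcomp u hu s hs, hFiso⟩⟩
    · push_neg at hcomp
      obtain ⟨u₀, hu₀S, z₀, hz₀S, hz₀na⟩ := hcomp
      set E0 : Finset (Sym2 (Fin n)) := G.edgeFinset.filter (fun e => ∀ x ∈ e, x ∉ S)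
        with hE0def
      set E1 : Finset (Sym2 (Fin n)) := G.edgeFinset.filter (fun e => ∃ x ∈ e, x ∈ S)
        with hE1def
      have hdisj : Disjoint E0 E1 := by
        rw [Finset.disjoint_left]
        intro e he0 he1
        obtain ⟨x, hxe, hxS⟩ := (Finset.mem_filter.1 he1).2
        exact (Finset.mem_filter.1 he0).2 x hxe hxS
      have hE01 : E0.card + E1.card ≤ m := by
        rw [← Finset.card_union_of_disjoint hdisj]
        exact Finset.card_le_card
          (Finset.union_subset (Finset.filter_subset _ _) (Finset.filter_subset _ _))
      set R : Finset (Fin n) := (W vs) \ S with hRdef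
      have hWR : ∀ u ∈ R, ∀ z ∈ S, G.Adj u z := by
        intro u hu z hz
        have h := (Finset.mem_filter.1 (Finset.mem_sdiff.1 hu).1).2
        exact h z hz
      have hRc : (1 - δ) * n - k ≤ (R.card : ℝ) := by
        have h1 : (W vs).card ≤ R.card + S.card := Finset.card_le_card_sdiff_add_card
        have h2 : ((W vs).card : ℝ) ≤ (R.card : ℝ) + k := by
          rw [← hPk]; exact_mod_cast h1
        linarith only [hWc, h2]
      have hE1c : k * R.card ≤ E1.card := by
        refine bipcount G R S E1 (fun u hu => (Finset.mem_sdiff.1 hu).2) ?_ k ?_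
        · intro u hu z hz hadj
          refine Finset.mem_filter.2 ⟨by rw [SimpleGraph.mem_edgeFinset]; exact hadj,
            ⟨z, by simp, hz⟩⟩
        · intro u hu
          have heq : S.filter (fun z => G.Adj u z) = S :=
            Finset.filter_true_of_mem (fun z hz => hWR u hu z hz)
          rw [heq]
          exact le_of_eq hPk.symm
      have hE0c : (E0.card : ℝ) ≤ (1 - e0 / 2) * n := by
        have h1 : (E0.card : ℝ) + (k : ℝ) * R.card ≤ (m : ℝ) := by
          have := le_trans (by omega : E0.card + k * R.card ≤ E0.card + E1.card) hE01
          exact_mod_cast this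
        have h2 : (k : ℝ) * ((1 - δ) * n - k) ≤ (k : ℝ) * R.card :=
          mul_le_mul_of_nonneg_left hRc (Nat.cast_nonneg k)
        have hmulδ : (k : ℝ) * δ * n ≤ e0 / 16 * n :=
          mul_le_mul_of_nonneg_right hkδ hn0.le
        have hk2 : (k : ℝ) ^ 2 ≤ 3 * e0 * n / 8 := by
          rw [hC5def] at hnC5
          have h5 : 8 * (k:ℝ)^2 / e0 ≤ n := by linarith only [hnC5]
          rw [div_le_iff₀ he0] at h5
          linarith only [h5, (mul_pos he0 hn0).le]
        have hmk1 : (m : ℝ) ≤ ((k:ℝ) + 1 - e0) * n := by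
          rw [hKdef] at hm; exact hm
        linarith only [h1, h2, hmk1, hmulδ, hk2, (mul_pos he0 hn0).le]
      set NB : Finset (Fin n) := univ.filter (fun z => z ∉ S ∧ G.Adj u₀ z) with hNBdef
      set D2 : Finset (Fin n) :=
        univ.filter (fun w => w ∉ S ∧ ∃ u, u ∉ S ∧ G.Adj u₀ u ∧ G.Adj u w) with hD2def
      set Z' : Finset (Fin n) := (NB ∪ D2).erase u₀ with hZ'def
      have hZ'c : Z'.card ≤ E0.card := by
        refine cover_bound G S u₀ hu₀S E0 ?_ NB D2 ?_ ?_
        · intro a b hab ha hb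
          refine Finset.mem_filter.2 ⟨by rw [SimpleGraph.mem_edgeFinset]; exact hab, ?_⟩
          intro x hx
          rcases Sym2.mem_iff.1 hx with rfl | rfl
          exacts [ha, hb]
        · intro z hz
          exact (Finset.mem_filter.1 hz).2
        · intro z hz
          exact ⟨(Finset.mem_filter.1 hz).2.1, fun _ => (Finset.mem_filter.1 hz).2.2⟩
      set Y : Finset (Fin n) := ((univ \ S) \ (insert u₀ Z')) \ B2 with hYdef
      have hYc : e0 / 4 * n ≤ (Y.card : ℝ) := by
        have c1 : (n : ℝ) ≤ ((univ \ S).card : ℝ) + k := by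
          have h := Finset.card_le_card_sdiff_add_card
            (s := (univ : Finset (Fin n))) (t := S)
          rw [hPk] at h
          have hu : (univ : Finset (Fin n)).card = n := by simp
          rw [hu] at h
          exact_mod_cast h
        have c2 : ((univ \ S).card : ℝ) ≤ (((univ \ S) \ insert u₀ Z').card : ℝ)
            + ((Z'.card : ℝ) + 1) := by
          have h := Finset.card_le_card_sdiff_add_card
            (s := (univ \ S)) (t := insert u₀ Z')
          have h2 : (insert u₀ Z').card ≤ Z'.card + 1 := Finset.card_insert_le _ _
          exact_mod_cast le_trans h (by omega)
        have c3 : (((univ \ S) \ insert u₀ Z').card : ℝ) ≤ (Y.card : ℝ) + B2.card := by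
          exact_mod_cast Finset.card_le_card_sdiff_add_card
        have c4 : (Z'.card : ℝ) ≤ (E0.card : ℝ) := by exact_mod_cast hZ'c
        have c5 : (k : ℝ) + 1 ≤ e0 / 32 * n := by
          rw [hC6def] at hnC6
          rw [div_le_iff₀ he0] at hnC6
          rw [div_mul_eq_mul_div, le_div_iff₀ (by norm_num : (0:ℝ) < 32)]
          linarith only [hnC6]
        have c6 : δ * n ≤ e0 / 32 * n := mul_le_mul_of_nonneg_right hδ32 hn0.le
        linarith only [c1, c2, c3, c4, hB2c, hE0c, c5, c6]
      have hYl : l * (d1 + 1) ≤ Y.card := by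
        have hc7 : (l : ℝ) * ((d1 : ℝ) + 1) ≤ e0 / 8 * n := by
          rw [hC7def] at hnC7
          rw [div_le_iff₀ he0] at hnC7
          rw [div_mul_eq_mul_div, le_div_iff₀ (by norm_num : (0:ℝ) < 8)]
          linarith only [hnC7]
        have h : ((l * (d1 + 1) : ℕ) : ℝ) ≤ (Y.card : ℝ) := by
          push_cast
          linarith only [hc7, hYc, mul_pos he0 hn0]
        exact_mod_cast h
      have hYdeg : ∀ y ∈ Y, G.degree y ≤ d1 := by
        intro y hy
        have h := (Finset.mem_sdiff.1 hy).2
        by_contra hcon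
        exact h (Finset.mem_filter.2 ⟨Finset.mem_univ _, by omega⟩)
      obtain ⟨X'', hX''Y, hX''card, hX''indep⟩ := indep_aux G d1 l Y hYdeg hYl
      have hmemY : ∀ w ∈ X'', w ∉ S ∧ w ∉ insert u₀ Z' := by
        intro w hw
        have hwY := hX''Y hw
        have h1 := (Finset.mem_sdiff.1 hwY).1
        exact ⟨(Finset.mem_sdiff.1 (Finset.mem_sdiff.1 h1).1).2, (Finset.mem_sdiff.1 h1).2⟩
      have hu₀X'' : u₀ ∉ X'' := fun h => (hmemY u₀ h).2 (Finset.mem_insert_self _ _)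
      have hnadj : ∀ w ∈ X'', ¬ G.Adj u₀ w := by
        intro w hw hadj
        obtain ⟨hwS, hwni⟩ := hmemY w hw
        have hwu₀ : w ≠ u₀ := fun h => hwni (h ▸ Finset.mem_insert_self _ _)
        have hwN : w ∈ NB := Finset.mem_filter.2 ⟨Finset.mem_univ _, hwS, hadj⟩
        exact hwni (Finset.mem_insert_of_mem
          (Finset.mem_erase.2 ⟨hwu₀, Finset.mem_union_left _ hwN⟩))
      refine ⟨S, hPk, Or.inl ⟨insert u₀ X'', ?_, ?_, ?_, u₀, Finset.mem_insert_self _ _, ?_⟩⟩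
      · intro x hx
        rcases Finset.mem_insert.1 hx with rfl | hx1
        · exact hu₀S
        · exact (hmemY x hx1).1
      · have h1 : X''.card ≤ (insert u₀ X'').card :=
          Finset.card_le_card (Finset.subset_insert _ _)
        omega
      · intro x hx y hy
        rcases Finset.mem_insert.1 hx with rfl | hx1 <;>
          rcases Finset.mem_insert.1 hy with rfl | hy1
        · exact G.loopless.irrefl _
        · exact hnadj y hy1
        · exact fun h => hnadj x hx1 h.symm
        · exact hX''indep x hx1 y hy1
      · intro w hw hwne
        have hw'' : w ∈ X'' := by
          rcases Finset.mem_insert.1 hw with rfl | h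
          · exact absurd rfl hwne
          · exact h
        obtain ⟨hwS, hwni⟩ := hmemY w hw''
        have hwu₀ : w ≠ u₀ := fun h => hwni (h ▸ Finset.mem_insert_self _ _)
        have hsub : G.neighborSet u₀ ∩ G.neighborSet w ⊆
            ((S.erase z₀ : Finset (Fin n)) : Set (Fin n)) := by
          rintro u ⟨hu1, hu2⟩
          rw [SimpleGraph.mem_neighborSet] at hu1 hu2
          by_cases huS : u ∈ S
          · have hne : u ≠ z₀ := by
              rintro rfl
              exact hz₀na hu1.symm
            exact Finset.mem_coe.2 (Finset.mem_erase.2 ⟨hne, huS⟩)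
          · exfalso
            have hwD : w ∈ D2 :=
              Finset.mem_filter.2 ⟨Finset.mem_univ _, hwS, u, huS, hu1, hu2.symm⟩
            exact hwni (Finset.mem_insert_of_mem
              (Finset.mem_erase.2 ⟨hwu₀, Finset.mem_union_right _ hwD⟩))
        constructor
        · refine hsub.trans ?_
          intro x hx
          exact Finset.mem_coe.2 (Finset.mem_of_mem_erase (Finset.mem_coe.1 hx))
        · rintro ⟨H, hHF, hiso⟩
          have hk' : (G.neighborSet u₀ ∩ G.neighborSet w).ncard = k :=
            iso_ncard_aux G _ H hiso
          have hle : (G.neighborSet u₀ ∩ G.neighborSet w).ncard ≤ (S.erase z₀).card := by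
            have h := Set.ncard_le_ncard hsub (Set.toFinite _)
            rwa [Set.ncard_coe_finset] at h
          rw [Finset.card_erase_of_mem hz₀S, hPk] at hle
          omega
  · -- CASE 1
    push_neg at hall
    obtain ⟨v, hvA, hnb⟩ := hall
    have hvBB : v ∉ B1 ∪ B2 := (Finset.mem_sdiff.1 hvA).2
    have hvdeg : G.degree v ≤ d1 := by
      by_contra hcon
      exact hvBB (Finset.mem_union_right _ (Finset.mem_filter.2 ⟨Finset.mem_univ _, by omega⟩))
    have hvP : (P v).card ≤ k := by
      by_contra hcon
      exact hvBB (Finset.mem_union_left _ (Finset.mem_filter.2 ⟨Finset.mem_univ _, by omega⟩))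
    set Q : Finset (Fin n) := G.neighborFinset v \ MB with hQdef
    set Ball : Finset (Fin n) :=
      insert v (G.neighborFinset v ∪ Q.biUnion (fun u => G.neighborFinset u)) with hBalldef
    have hBallc : (Ball.card : ℝ) ≤ δ * n / 4 := by
      have b1 : Ball.card ≤ 1 + ((G.neighborFinset v).card
          + (Q.biUnion (fun u => G.neighborFinset u)).card) := by
        refine le_trans (Finset.card_insert_le _ _) ?_
        have := Finset.card_union_le (G.neighborFinset v) (Q.biUnion (fun u => G.neighborFinset u))
        omega
      have b2 : (Q.biUnion (fun u => G.neighborFinset u)).card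
          ≤ ∑ u ∈ Q, (G.neighborFinset u).card := Finset.card_biUnion_le
      have b3 : (∑ u ∈ Q, ((G.neighborFinset u).card : ℝ)) ≤ (Q.card : ℝ) * (θ * n) := by
        have h := Finset.sum_le_card_nsmul Q (fun u => ((G.neighborFinset u).card : ℝ)) (θ * n)
          (fun u hu => by
            show ((G.neighborFinset u).card : ℝ) ≤ θ * n
            have huMB : u ∉ MB := (Finset.mem_sdiff.1 hu).2
            have : ¬ (θ * n ≤ (G.degree u : ℝ)) := fun hc =>
              huMB (Finset.mem_filter.2 ⟨Finset.mem_univ _, hc⟩)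
            rw [card_neighborFinset_eq_degree]
            linarith only [not_le.1 this])
        rwa [nsmul_eq_mul] at h
      have b4 : (Q.card : ℝ) ≤ (d1 : ℝ) := by
        have h1 : Q.card ≤ (G.neighborFinset v).card :=
          Finset.card_le_card (Finset.sdiff_subset)
        rw [card_neighborFinset_eq_degree] at h1
        exact_mod_cast le_trans h1 hvdeg
      have b5 : (Q.card : ℝ) * (θ * n) ≤ (d1 : ℝ) * θ * n := by
        have := mul_le_mul_of_nonneg_right b4 (by positivity : (0:ℝ) ≤ θ * n)
        calc (Q.card : ℝ) * (θ * n) ≤ (d1 : ℝ) * (θ * n) := this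
        _ = (d1 : ℝ) * θ * n := by ring
      have b6 : (d1:ℝ) * θ * n ≤ δ / 8 * n := mul_le_mul_of_nonneg_right hd1θ hn0.le
      have b7 : 1 + (d1 : ℝ) ≤ δ / 8 * n := by
        rw [hC2def] at hnC2
        rw [div_le_iff₀ hδ] at hnC2
        rw [div_mul_eq_mul_div, le_div_iff₀ (by norm_num : (0:ℝ) < 8)]
        linarith only [hnC2]
      have b8 : (Ball.card : ℝ) ≤ 1 + ((G.degree v : ℝ)
          + (∑ u ∈ Q, ((G.neighborFinset u).card : ℝ))) := by
        have : ((G.neighborFinset v).card : ℝ) = (G.degree v : ℝ) := by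
          rw [card_neighborFinset_eq_degree]
        push_cast
        have b12 := le_trans b1 (by omega : 1 + ((G.neighborFinset v).card
          + (Q.biUnion (fun u => G.neighborFinset u)).card) ≤ 1 + ((G.neighborFinset v).card
          + ∑ u ∈ Q, (G.neighborFinset u).card))
        calc (Ball.card : ℝ) ≤ ((1 + ((G.neighborFinset v).card
            + ∑ u ∈ Q, (G.neighborFinset u).card) : ℕ) : ℝ) := by exact_mod_cast b12
        _ = 1 + ((G.degree v : ℝ) + (∑ u ∈ Q, ((G.neighborFinset u).card : ℝ))) := by
            push_cast [card_neighborFinset_eq_degree]; ring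
      have b9 : (G.degree v : ℝ) ≤ (d1 : ℝ) := by exact_mod_cast hvdeg
      linarith only [b8, b9, b3, b5, b6, b7]
    obtain ⟨Bad, hBadc, hBadmem⟩ : ∃ Bad : Finset (Fin n), ((Bad.card : ℝ) ≤ (1 - δ) * n) ∧
        (∀ w, w ∈ W v → (P v).card = k →
          (∃ H ∈ F, Nonempty ((G.induce ((P v : Finset (Fin n)) : Set (Fin n))) ≃g H)) →
          w ∈ Bad) := by
      by_cases hbl : (P v).card = k ∧
          (∃ H ∈ F, Nonempty ((G.induce ((P v : Finset (Fin n)) : Set (Fin n))) ≃g H))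
      · exact ⟨W v, le_of_lt (hnb hbl.1 hbl.2), fun w hw _ _ => hw⟩
      · refine ⟨∅, ?_, fun w hw h1 h2 => absurd ⟨h1, h2⟩ hbl⟩
        have h1 : (0:ℝ) ≤ (1 - δ) * n := mul_nonneg (by linarith only [hδ1]) hn0.le
        simpa using h1
    set Y : Finset (Fin n) := (univ \ (Ball ∪ Bad)) \ B2 with hYdef
    have hYc : δ / 2 * n ≤ (Y.card : ℝ) := by
      have c1 : (n : ℝ) ≤ ((univ \ (Ball ∪ Bad)).card : ℝ)
          + ((Ball.card : ℝ) + Bad.card) := by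
        have h1 : (univ : Finset (Fin n)).card ≤ (univ \ (Ball ∪ Bad)).card
            + (Ball ∪ Bad).card := Finset.card_le_card_sdiff_add_card
        have h2 : (Ball ∪ Bad).card ≤ Ball.card + Bad.card := Finset.card_union_le _ _
        have hu : (univ : Finset (Fin n)).card = n := by simp
        rw [hu] at h1
        exact_mod_cast le_trans h1 (by omega)
      have c2 : ((univ \ (Ball ∪ Bad)).card : ℝ) ≤ (Y.card : ℝ) + B2.card := by
        exact_mod_cast Finset.card_le_card_sdiff_add_card
      linarith only [c1, c2, hBallc, hBadc, hB2c]
    have hYl : l * (d1 + 1) ≤ Y.card := by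
      have hc3 : (l : ℝ) * ((d1 : ℝ) + 1) ≤ δ / 2 * n := by
        rw [hC3def] at hnC3
        rw [div_le_iff₀ hδ] at hnC3
        rw [div_mul_eq_mul_div, le_div_iff₀ (by norm_num : (0:ℝ) < 2)]
        linarith only [hnC3]
      have h : ((l * (d1 + 1) : ℕ) : ℝ) ≤ (Y.card : ℝ) := by
        push_cast
        linarith only [hc3, hYc]
      exact_mod_cast h
    have hYdeg : ∀ y ∈ Y, G.degree y ≤ d1 := by
      intro y hy
      have h := (Finset.mem_sdiff.1 hy).2
      by_contra hcon
      exact h (Finset.mem_filter.2 ⟨Finset.mem_univ _, by omega⟩)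
    obtain ⟨X'', hX''Y, hX''card, hX''indep⟩ := indep_aux G d1 l Y hYdeg hYl
    have hYprop : ∀ w ∈ X'', w ∉ Ball ∧ w ∉ Bad := by
      intro w hw
      have h1 := (Finset.mem_sdiff.1 (hX''Y hw)).1
      have h2 := (Finset.mem_sdiff.1 h1).2
      exact ⟨fun hc => h2 (Finset.mem_union_left _ hc), fun hc => h2 (Finset.mem_union_right _ hc)⟩
    have hvX'' : v ∉ X'' := fun h => (hYprop v h).1 (Finset.mem_insert_self _ _)
    have hnadjv : ∀ w ∈ X'', ¬ G.Adj v w := fun w hw hadj =>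
      (hYprop w hw).1 (Finset.mem_insert_of_mem
        (Finset.mem_union_left _ ((G.mem_neighborFinset _ _).2 hadj)))
    set X : Finset (Fin n) := insert v X'' with hXdef
    have hXcard : X.card ≤ l + 1 := by
      rw [hXdef]
      have := Finset.card_insert_le v X''
      omega
    have hpadsz : k - (P v).card ≤ (univ \ (P v ∪ X)).card := by
      have h1 : (univ : Finset (Fin n)).card ≤ (univ \ (P v ∪ X)).card + (P v ∪ X).card :=
        Finset.card_le_card_sdiff_add_card
      have h2 : (P v ∪ X).card ≤ (P v).card + X.card := Finset.card_union_le _ _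
      have hu : (univ : Finset (Fin n)).card = n := by simp
      omega
    obtain ⟨pad, hpadsub, hpadcard⟩ := Finset.exists_subset_card_eq hpadsz
    set S : Finset (Fin n) := P v ∪ pad with hSdef
    have hdisjPp : Disjoint (P v) pad := by
      rw [Finset.disjoint_left]
      intro a haP hapad
      exact (Finset.mem_sdiff.1 (hpadsub hapad)).2 (Finset.mem_union_left _ haP)
    have hScard : S.card = k := by
      rw [hSdef, Finset.card_union_of_disjoint hdisjPp, hpadcard]
      omega
    have hXS : ∀ x ∈ X, x ∉ S := by
      intro x hx hxS
      rcases Finset.mem_union.1 hxS with hxP | hxpad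
      · have hadj : G.Adj v x := (Finset.mem_filter.1 hxP).2
        rcases Finset.mem_insert.1 hx with rfl | hx1
        · exact G.loopless.irrefl _ hadj
        · exact hnadjv x hx1 hadj
      · exact (Finset.mem_sdiff.1 (hpadsub hxpad)).2 (Finset.mem_union_right _ hx)
    refine ⟨S, hScard, Or.inl ⟨X, hXS, ?_, ?_, v, Finset.mem_insert_self _ _, ?_⟩⟩
    · have h1 : X''.card ≤ X.card := Finset.card_le_card (Finset.subset_insert _ _)
      omega
    · intro x hx y hy
      rcases Finset.mem_insert.1 hx with rfl | hx1 <;>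
        rcases Finset.mem_insert.1 hy with rfl | hy1
      · exact G.loopless.irrefl _
      · exact hnadjv y hy1
      · exact fun h => hnadjv x hx1 h.symm
      · exact hX''indep x hx1 y hy1
    · intro w hw hwne
      have hw'' : w ∈ X'' := by
        rcases Finset.mem_insert.1 hw with rfl | h
        · exact absurd rfl hwne
        · exact h
      have hwBall : w ∉ Ball := (hYprop w hw'').1
      have hsubP : G.neighborSet v ∩ G.neighborSet w ⊆
          ((P v : Finset (Fin n)) : Set (Fin n)) := by
        rintro u ⟨hu1, hu2⟩
        rw [SimpleGraph.mem_neighborSet] at hu1 hu2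
        by_cases huMB : u ∈ MB
        · exact Finset.mem_coe.2 (Finset.mem_filter.2 ⟨huMB, hu1⟩)
        · exfalso
          have huQ : u ∈ Q := Finset.mem_sdiff.2 ⟨(G.mem_neighborFinset _ _).2 hu1, huMB⟩
          exact hwBall (Finset.mem_insert_of_mem (Finset.mem_union_right _
            (Finset.mem_biUnion.2 ⟨u, huQ, (G.mem_neighborFinset _ _).2 hu2.symm⟩)))
      constructor
      · refine hsubP.trans ?_
        intro x hx
        exact Finset.mem_coe.2 (Finset.mem_union_left _ (Finset.mem_coe.1 hx))
      · rintro ⟨H, hHF, hiso⟩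
        have hnc : (G.neighborSet v ∩ G.neighborSet w).ncard = k := iso_ncard_aux G _ H hiso
        have hle : ((P v : Finset (Fin n)) : Set (Fin n)).ncard ≤
            (G.neighborSet v ∩ G.neighborSet w).ncard := by
          rw [Set.ncard_coe_finset, hnc]
          exact hvP
        have heq : G.neighborSet v ∩ G.neighborSet w =
            ((P v : Finset (Fin n)) : Set (Fin n)) :=
          Set.eq_of_subset_of_ncard_le hsubP hle (Set.toFinite _)
        have hPk : (P v).card = k := by
          have h' : ((P v : Finset (Fin n)) : Set (Fin n)).ncard = k := by
            rw [← heq, hnc]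
          rwa [Set.ncard_coe_finset] at h'
        have hiso' : Nonempty ((G.induce ((P v : Finset (Fin n)) : Set (Fin n))) ≃g H) :=
          heq ▸ hiso
        have hwW : w ∈ W v := by
          refine Finset.mem_filter.2 ⟨Finset.mem_univ _, fun z hz => ?_⟩
          have hz' : (z : Fin n) ∈ ((P v : Finset (Fin n)) : Set (Fin n)) :=
            Finset.mem_coe.2 hz
          rw [← heq] at hz'
          exact hz'.2
        exact absurd (hBadmem w hwW hPk ⟨H, hHF, hiso'⟩) ((hYprop w hw'').2)
end

section
/- For each positive integer k, let Λ be an edge-colored graph in F̂_k, and let Γ be the edge-colored graph obtained from Λ by adding two new non-adjacent vertices, each joined to every vertex of Λ, where all newly added edges are assigned pairwise distinct colors not appearing in Λ. Then Γ belongs to F̂_{k+1}. In particular, f(k+1) ≤ f(k) + 2. -/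
open SimpleGraph

variable {V : Type*} {W : Type*}

section FHatAuxLemmas

lemma sym2_pair_inj' {α β : Type*} {F : α → β} (hF : Function.Injective F)
    {i j i' j' : α} (h : s(F i, F j) = s(F i', F j')) : s(i, j) = s(i', j') := by
  rw [Sym2.eq_iff] at h ⊢
  rcases h with ⟨h1, h2⟩ | ⟨h1, h2⟩
  · exact Or.inl ⟨hF h1, hF h2⟩
  · exact Or.inr ⟨hF h1, hF h2⟩

lemma fhat_part1 : ∀ k : ℕ, 1 ≤ k → ∀ (V : Type) (L : SimpleGraph V) (c : Sym2 V → ℕ), FHat k L c →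
      ∀ (Γ : SimpleGraph (V ⊕ Fin 2)) (c' : Sym2 (V ⊕ Fin 2) → ℕ),
        (∀ a b : V, Γ.Adj (Sum.inl a) (Sum.inl b) ↔ L.Adj a b) →
        (∀ (a : V) (i : Fin 2), Γ.Adj (Sum.inl a) (Sum.inr i)) →
        (∀ i j : Fin 2, ¬ Γ.Adj (Sum.inr i) (Sum.inr j)) →
        (∀ a b : V, L.Adj a b → c' s(Sum.inl a, Sum.inl b) = c s(a, b)) →
        (∀ e₁ ∈ Γ.edgeSet, ∀ e₂ ∈ Γ.edgeSet,
          (∃ i : Fin 2, Sum.inr i ∈ e₁) → (∃ i : Fin 2, Sum.inr i ∈ e₂) →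
          c' e₁ = c' e₂ → e₁ = e₂) →
        (∀ e₁ ∈ Γ.edgeSet, (∃ i : Fin 2, Sum.inr i ∈ e₁) →
          ∀ e₂ ∈ L.edgeSet, c' e₁ ≠ c e₂) →
        FHat (k + 1) Γ c' := by
  rintro k hk V L c ⟨hL1, hL2, hL3⟩ Γ c' hAdjL hAdjDom hNonadj hcOld hcInj hcFresh
  -- the key extension construction
  have key : ∀ (j : Fin 2) (A : Set V) (C : Set ℕ),
      (∀ e ∈ Γ.edgeSet, Sum.inr j ∈ e → c' e ∉ C) →
      ∀ A' : Set (V ⊕ Fin 2), (∀ a : V, a ∉ A → Sum.inl a ∉ A') → Sum.inr j ∉ A' →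
      HasRainbowKClique L c k A C → HasRainbowKClique Γ c' (k + 1) A' C := by
    rintro j A C hjC A' hA' hjA' ⟨f, hfA, hfadj, hfC, hfrb⟩
    set F : Fin (k + 1) → V ⊕ Fin 2 := Fin.snoc (fun i => Sum.inl (f i)) (Sum.inr j) with hFdef
    have hFc : ∀ i : Fin k, F i.castSucc = Sum.inl (f i) := fun i => Fin.snoc_castSucc _ _ i
    have hFl : F (Fin.last k) = Sum.inr j := Fin.snoc_last _ _
    have hFinj : Function.Injective F := by
      intro x y hxy
      induction x using Fin.lastCases with
      | last =>
        induction y using Fin.lastCases with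
        | last => rfl
        | cast y => rw [hFl, hFc] at hxy; exact absurd hxy (by simp)
      | cast x =>
        induction y using Fin.lastCases with
        | last => rw [hFl, hFc] at hxy; exact absurd hxy (by simp)
        | cast y => rw [hFc, hFc] at hxy; exact congrArg _ (f.injective (Sum.inl.inj hxy))
    have hadj : ∀ x y : Fin (k + 1), x ≠ y → Γ.Adj (F x) (F y) := by
      intro x y hxy
      induction x using Fin.lastCases with
      | last =>
        induction y using Fin.lastCases with
        | last => exact absurd rfl hxy
        | cast y => rw [hFl, hFc]; exact (hAdjDom (f y) j).symm
      | cast x =>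
        induction y using Fin.lastCases with
        | last => rw [hFl, hFc]; exact hAdjDom (f x) j
        | cast y =>
          rw [hFc, hFc]
          exact (hAdjL _ _).mpr (hfadj x y (fun h => hxy (congrArg Fin.castSucc h)))
    have hcol : ∀ x y : Fin (k + 1), x ≠ y → (x = Fin.last k ∨ y = Fin.last k) →
        s(F x, F y) ∈ Γ.edgeSet ∧ Sum.inr j ∈ s(F x, F y) := by
      intro x y hxy h
      refine ⟨hadj x y hxy, ?_⟩
      rcases h with rfl | rfl
      · rw [hFl]; exact Sym2.mem_mk_left _ _
      · rw [hFl]; exact Sym2.mem_mk_right _ _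
    have hcolold : ∀ x y : Fin k, x ≠ y →
        c' s(F x.castSucc, F y.castSucc) = c s(f x, f y) ∧ s(f x, f y) ∈ L.edgeSet := by
      intro x y hxy
      have hL : L.Adj (f x) (f y) := hfadj x y hxy
      rw [hFc, hFc]
      exact ⟨hcOld _ _ hL, hL⟩
    refine ⟨⟨F, hFinj⟩, ?_, hadj, ?_, ?_⟩
    · intro i
      show F i ∉ A'
      induction i using Fin.lastCases with
      | last => rw [hFl]; exact hjA'
      | cast i => rw [hFc]; exact hA' _ (hfA i)
    · intro x y hxy
      show c' s(F x, F y) ∉ C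
      by_cases h : x = Fin.last k ∨ y = Fin.last k
      · obtain ⟨he, hm⟩ := hcol x y hxy h
        exact hjC _ he hm
      · push_neg at h
        obtain ⟨x', rfl⟩ := Fin.exists_castSucc_eq.mpr h.1
        obtain ⟨y', rfl⟩ := Fin.exists_castSucc_eq.mpr h.2
        have hxy' : x' ≠ y' := fun h' => hxy (congrArg _ h')
        rw [(hcolold x' y' hxy').1]
        exact hfC x' y' hxy'
    · intro x y x' y' hxy hx'y' hcc
      simp only [Function.Embedding.coeFn_mk] at hcc
      by_cases h1 : x = Fin.last k ∨ y = Fin.last k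
      · by_cases h2 : x' = Fin.last k ∨ y' = Fin.last k
        · obtain ⟨he1, hm1⟩ := hcol x y hxy h1
          obtain ⟨he2, hm2⟩ := hcol x' y' hx'y' h2
          exact sym2_pair_inj' hFinj (hcInj _ he1 _ he2 ⟨j, hm1⟩ ⟨j, hm2⟩ hcc)
        · push_neg at h2
          obtain ⟨a, rfl⟩ := Fin.exists_castSucc_eq.mpr h2.1
          obtain ⟨b, rfl⟩ := Fin.exists_castSucc_eq.mpr h2.2
          have hab : a ≠ b := fun h' => hx'y' (congrArg _ h')
          obtain ⟨hc2, he2⟩ := hcolold a b hab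
          obtain ⟨he1, hm1⟩ := hcol x y hxy h1
          exact absurd (hcc.trans hc2) (hcFresh _ he1 ⟨j, hm1⟩ _ he2)
      · push_neg at h1
        obtain ⟨a, rfl⟩ := Fin.exists_castSucc_eq.mpr h1.1
        obtain ⟨b, rfl⟩ := Fin.exists_castSucc_eq.mpr h1.2
        have hab : a ≠ b := fun h' => hxy (congrArg _ h')
        obtain ⟨hc1, he1⟩ := hcolold a b hab
        by_cases h2 : x' = Fin.last k ∨ y' = Fin.last k
        · obtain ⟨he2, hm2⟩ := hcol x' y' hx'y' h2
          exact absurd (hcc.symm.trans hc1) (hcFresh _ he2 ⟨j, hm2⟩ _ he1)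
        · push_neg at h2
          obtain ⟨a', rfl⟩ := Fin.exists_castSucc_eq.mpr h2.1
          obtain ⟨b', rfl⟩ := Fin.exists_castSucc_eq.mpr h2.2
          have hab' : a' ≠ b' := fun h' => hx'y' (congrArg _ h')
          obtain ⟨hc1', he1'⟩ := hcolold a' b' hab'
          rw [hc1, hc1'] at hcc
          have := hfrb a b a' b' hab hab' hcc
          have := congrArg (Sym2.map Fin.castSucc) this
          rwa [Sym2.map_pair_eq, Sym2.map_pair_eq] at this
  refine ⟨?_, ?_, ?_⟩
  · -- no rainbow K_{k+2}
    rintro ⟨f, -, hadj, -, hrb⟩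
    obtain ⟨i₀, hi₀⟩ : ∃ i₀ : Fin (k + 1 + 1), ∀ i, i ≠ i₀ → ∃ a, f i = Sum.inl a := by
      by_cases h : ∃ i a, f i = Sum.inr a
      · obtain ⟨i₀, a₀, h₀⟩ := h
        refine ⟨i₀, fun i hi => ?_⟩
        cases hfi : f i with
        | inl a => exact ⟨a, rfl⟩
        | inr b =>
          have := hadj i i₀ hi
          rw [hfi, h₀] at this
          exact absurd this (hNonadj b a₀)
      · push_neg at h
        refine ⟨Fin.last _, fun i _ => ?_⟩
        cases hfi : f i with
        | inl a => exact ⟨a, rfl⟩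
        | inr b => exact absurd hfi (h i b)
    choose g hg using fun i => hi₀ (i₀.succAbove i) (Fin.succAbove_ne i₀ i)
    have hginj : Function.Injective g := by
      intro x y hxy
      have : f (i₀.succAbove x) = f (i₀.succAbove y) := by rw [hg, hg, hxy]
      exact Fin.succAbove_right_injective (f.injective this)
    have hsane : ∀ x y : Fin (k + 1), x ≠ y → i₀.succAbove x ≠ i₀.succAbove y :=
      fun x y h hc => h (Fin.succAbove_right_injective hc)
    have hLadj : ∀ x y : Fin (k + 1), x ≠ y → L.Adj (g x) (g y) := by
      intro x y h
      have := hadj _ _ (hsane x y h)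
      rw [hg, hg] at this
      exact (hAdjL _ _).mp this
    have hcg : ∀ x y : Fin (k + 1), x ≠ y →
        c s(g x, g y) = c' s(f (i₀.succAbove x), f (i₀.succAbove y)) := by
      intro x y h
      rw [hg, hg]
      exact (hcOld _ _ (hLadj x y h)).symm
    refine hL1 ⟨⟨g, hginj⟩, fun i => Set.notMem_empty _, hLadj,
      fun _ _ _ => Set.notMem_empty _, ?_⟩
    intro x y x' y' hxy hx'y' hcc
    simp only [Function.Embedding.coeFn_mk] at hcc
    rw [hcg x y hxy, hcg x' y' hx'y'] at hcc
    exact sym2_pair_inj' Fin.succAbove_right_injective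
      (hrb _ _ _ _ (hsane x y hxy) (hsane x' y' hx'y') hcc)
  · -- vertex deletion
    intro v
    cases v with
    | inl a =>
      refine key 0 {a} ∅ (fun _ _ _ h => (Set.notMem_empty _ h).elim) {Sum.inl a} ?_ (by simp)
        (hL2 a)
      intro b hb hm
      exact hb (by simpa using hm)
    | inr i =>
      obtain ⟨f, hfA, hfadj, hfC, hfrb⟩ := hL3 0
      have hji : (if i = 0 then (1 : Fin 2) else 0) ≠ i := by
        by_cases h : i = 0
        · simp [h]
        · simp only [if_neg h]
          exact fun h' => h h'.symm
      refine key (if i = 0 then 1 else 0) ∅ ∅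
        (fun _ _ _ h => (Set.notMem_empty _ h).elim) {Sum.inr i}
        (fun b _ hm => by simp at hm)
        (by simp only [Set.mem_singleton_iff]; exact fun h => hji (Sum.inr.inj h))
        ⟨f, fun _ => Set.notMem_empty _, hfadj, fun _ _ _ => Set.notMem_empty _, hfrb⟩
  · -- color avoidance
    intro col
    obtain ⟨j, hj⟩ : ∃ j : Fin 2, ∀ e ∈ Γ.edgeSet, Sum.inr j ∈ e → c' e ≠ col := by
      by_contra h
      push_neg at h
      obtain ⟨e₀, he₀, hm₀, hc₀⟩ := h 0
      obtain ⟨e₁, he₁, hm₁, hc₁⟩ := h 1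
      have heq : e₀ = e₁ := hcInj _ he₀ _ he₁ ⟨0, hm₀⟩ ⟨1, hm₁⟩ (hc₀.trans hc₁.symm)
      have key2 : ∀ e : Sym2 (V ⊕ Fin 2), e ∈ Γ.edgeSet →
          Sum.inr (0 : Fin 2) ∈ e → Sum.inr (1 : Fin 2) ∈ e → False := by
        intro e
        induction e using Sym2.ind with
        | _ x y =>
          intro he h0 h1
          rw [SimpleGraph.mem_edgeSet] at he
          rw [Sym2.mem_iff] at h0 h1
          rcases h0 with rfl | rfl <;> rcases h1 with h' | h'
          · exact absurd h' (by simp)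
          · rw [← h'] at he; exact hNonadj 0 1 he
          · rw [← h'] at he; exact hNonadj 1 0 he
          · exact absurd h' (by simp)
      exact key2 e₀ he₀ hm₀ (heq ▸ hm₁)
    exact key j ∅ {col} (fun e he hm hc => hj e he hm (by simpa using hc)) ∅
      (fun _ _ => Set.notMem_empty _) (Set.notMem_empty _) (hL3 col)

end FHatAuxLemmas

lemma fhat_equiv {α β : Type} (e : α ≃ β) (k : ℕ) (G : SimpleGraph α) (c : Sym2 α → ℕ)
    (h : FHat k G c) :
    FHat k (SimpleGraph.map e.toEmbedding G) (fun s => c (Sym2.map e.symm s)) := by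
  obtain ⟨h1, h2, h3⟩ := h
  have hcol : ∀ x y : β, (fun s => c (Sym2.map e.symm s)) s(x, y) = c s(e.symm x, e.symm y) := by
    intro x y; simp [Sym2.map_pair_eq]
  have hcol' : ∀ x y : α, (fun s => c (Sym2.map e.symm s)) s(e x, e y) = c s(x, y) := by
    intro x y; simp [Sym2.map_pair_eq]
  have hpush : ∀ (A : Set α) (C : Set ℕ) (m : ℕ), HasRainbowKClique G c m A C →
      HasRainbowKClique (SimpleGraph.map e.toEmbedding G)
        (fun s => c (Sym2.map e.symm s)) m (e.symm ⁻¹' A) C := by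
    rintro A C m ⟨f, hfA, hfadj, hfC, hfrb⟩
    refine ⟨f.trans e.toEmbedding, ?_, ?_, ?_, ?_⟩
    · intro i
      simp only [Function.Embedding.trans_apply, Equiv.coe_toEmbedding, Set.mem_preimage,
        Equiv.symm_apply_apply]
      exact hfA i
    · intro i j hij
      exact (SimpleGraph.map_adj _ _ _ _).mpr ⟨f i, f j, hfadj i j hij, rfl, rfl⟩
    · intro i j hij
      simpa only [Function.Embedding.trans_apply, Equiv.coe_toEmbedding, hcol'] using hfC i j hij
    · intro i j i' j' hij hi'j' hcc
      simp only [Function.Embedding.trans_apply, Equiv.coe_toEmbedding, hcol'] at hcc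
      exact hfrb i j i' j' hij hi'j' hcc
  refine ⟨?_, ?_, ?_⟩
  · rintro ⟨f, hfA, hfadj, hfC, hfrb⟩
    refine h1 ⟨f.trans e.symm.toEmbedding, fun i => Set.notMem_empty _, ?_,
      fun _ _ _ => Set.notMem_empty _, ?_⟩
    · intro i j hij
      obtain ⟨a, b, hab, ha, hb⟩ := (SimpleGraph.map_adj _ _ _ _).mp (hfadj i j hij)
      simp only [Function.Embedding.trans_apply, Equiv.coe_toEmbedding]
      have ha' : e.symm (f i) = a := by simp [← ha]
      have hb' : e.symm (f j) = b := by simp [← hb]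
      rw [ha', hb']
      exact hab
    · intro i j i' j' hij hi'j' hcc
      refine hfrb i j i' j' hij hi'j' ?_
      simpa only [Function.Embedding.trans_apply, Equiv.coe_toEmbedding, hcol] using hcc
  · intro v
    have := hpush {e.symm v} ∅ k (h2 (e.symm v))
    have hset : e.symm ⁻¹' {e.symm v} = {v} := by
      ext x
      simp only [Set.mem_preimage, Set.mem_singleton_iff]
      exact ⟨fun hx => by simpa using congrArg e hx, fun hx => by rw [hx]⟩
    rwa [hset] at this
  · intro col
    have := hpush ∅ {col} k (h3 col)
    have hset : e.symm ⁻¹' (∅ : Set α) = ∅ := by simp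
    rwa [hset] at this

lemma fhat_step (k : ℕ) (hk : 1 ≤ k) (m : ℕ) (G : SimpleGraph (Fin m)) (c : Sym2 (Fin m) → ℕ)
    (h : FHat k G c) :
    ∃ (Γ : SimpleGraph (Fin (m + 2))) (c' : Sym2 (Fin (m + 2)) → ℕ), FHat (k + 1) Γ c' := by
  classical
  set N : ℕ := (Finset.univ.sup c) + 1 with hN
  let Γ₀ : SimpleGraph (Fin m ⊕ Fin 2) :=
    { Adj := fun x y =>
        match x, y with
        | Sum.inl a, Sum.inl b => G.Adj a b
        | Sum.inl _, Sum.inr _ => True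
        | Sum.inr _, Sum.inl _ => True
        | Sum.inr _, Sum.inr _ => False
      symm := by refine ⟨?_⟩; rintro (a | a) (b | b) h'
                 exacts [h'.symm, trivial, trivial, h']
      loopless := by refine ⟨?_⟩; rintro (a | a) h'
                     exacts [G.loopless.irrefl a h', h'] }
  let gcol : (Fin m ⊕ Fin 2) → (Fin m ⊕ Fin 2) → ℕ := fun x y =>
    match x, y with
    | Sum.inl a, Sum.inl b => c s(a, b)
    | Sum.inl a, Sum.inr i => N + 2 * a.val + i.val
    | Sum.inr i, Sum.inl a => N + 2 * a.val + i.val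
    | Sum.inr _, Sum.inr _ => 0
  have gsymm : ∀ x y, gcol x y = gcol y x := by
    rintro (a | a) (b | b)
    · show c s(a, b) = c s(b, a)
      rw [Sym2.eq_swap]
    · rfl
    · rfl
    · rfl
  let c₀ : Sym2 (Fin m ⊕ Fin 2) → ℕ := Sym2.lift ⟨gcol, gsymm⟩
  have hc₀ : ∀ x y, c₀ s(x, y) = gcol x y := fun x y => Sym2.lift_mk _ _ _
  have hcan : ∀ e ∈ Γ₀.edgeSet, (∃ i : Fin 2, Sum.inr i ∈ e) →
      ∃ (a : Fin m) (i : Fin 2), e = s(Sum.inl a, Sum.inr i) := by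
    intro e he hm
    induction e using Sym2.ind with
    | _ x y =>
      rw [SimpleGraph.mem_edgeSet] at he
      obtain ⟨i, hi⟩ := hm
      rw [Sym2.mem_iff] at hi
      rcases x with a | i' <;> rcases y with b | j'
      · rcases hi with h' | h' <;> exact absurd h' (by simp)
      · exact ⟨a, j', rfl⟩
      · exact ⟨b, i', Sym2.eq_swap⟩
      · exact absurd he (by exact fun h' => h')
  have hval : ∀ (a : Fin m) (i : Fin 2), c₀ s(Sum.inl a, Sum.inr i) = N + 2 * a.val + i.val :=
    fun a i => hc₀ _ _
  have h5 : ∀ e₁ ∈ Γ₀.edgeSet, ∀ e₂ ∈ Γ₀.edgeSet,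
      (∃ i : Fin 2, Sum.inr i ∈ e₁) → (∃ i : Fin 2, Sum.inr i ∈ e₂) →
      c₀ e₁ = c₀ e₂ → e₁ = e₂ := by
    intro e₁ he₁ e₂ he₂ hm₁ hm₂ hcc
    obtain ⟨a, i, rfl⟩ := hcan e₁ he₁ hm₁
    obtain ⟨b, j, rfl⟩ := hcan e₂ he₂ hm₂
    rw [hval, hval] at hcc
    have hi : i.val < 2 := i.isLt
    have hj : j.val < 2 := j.isLt
    have hab : a = b := Fin.ext (by omega)
    have hij : i = j := Fin.ext (by omega)
    rw [hab, hij]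
  have h6 : ∀ e₁ ∈ Γ₀.edgeSet, (∃ i : Fin 2, Sum.inr i ∈ e₁) →
      ∀ e₂ ∈ G.edgeSet, c₀ e₁ ≠ c e₂ := by
    intro e₁ he₁ hm₁ e₂ _
    obtain ⟨a, i, rfl⟩ := hcan e₁ he₁ hm₁
    rw [hval]
    have : c e₂ ≤ Finset.univ.sup c := Finset.le_sup (Finset.mem_univ e₂)
    omega
  have hf : FHat (k + 1) Γ₀ c₀ :=
    fhat_part1 k hk (Fin m) G c h Γ₀ c₀ (fun a b => Iff.rfl) (fun a i => trivial)
      (fun i j h' => h') (fun a b _ => hc₀ _ _) h5 h6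
  exact ⟨_, _, fhat_equiv finSumFinEquiv (k + 1) Γ₀ c₀ hf⟩

lemma fhat_base : ∃ (G : SimpleGraph (Fin 2)) (c : Sym2 (Fin 2) → ℕ), FHat 1 G c := by
  refine ⟨⊥, fun _ => 0, ?_, ?_, ?_⟩
  · rintro ⟨f, -, hadj, -, -⟩
    exact hadj 0 1 (by decide)
  · intro v
    refine ⟨⟨fun _ => if v = 0 then 1 else 0, fun a b _ => Subsingleton.elim a b⟩, ?_,
      fun i j hij => absurd (Subsingleton.elim i j) hij,
      fun i j hij => absurd (Subsingleton.elim i j) hij,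
      fun i j _ _ hij => absurd (Subsingleton.elim i j) hij⟩
    intro i
    simp only [Function.Embedding.coeFn_mk, Set.mem_singleton_iff]
    by_cases h : v = 0
    · simp [h]
    · simp only [if_neg h]
      exact fun h' => h h'.symm
  · intro col
    exact ⟨⟨fun _ => 0, fun a b _ => Subsingleton.elim a b⟩, fun i => Set.notMem_empty _,
      fun i j hij => absurd (Subsingleton.elim i j) hij,
      fun i j hij => absurd (Subsingleton.elim i j) hij,
      fun i j _ _ hij => absurd (Subsingleton.elim i j) hij⟩

lemma fhat_nonempty : ∀ k : ℕ, 1 ≤ k →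
    {m | ∃ (G : SimpleGraph (Fin m)) (c : Sym2 (Fin m) → ℕ), FHat k G c}.Nonempty := by
  intro k hk
  induction k with
  | zero => omega
  | succ n ih =>
    by_cases hn : n = 0
    · subst hn
      exact ⟨2, fhat_base⟩
    · obtain ⟨m, G, c, h⟩ := ih (by omega)
      obtain ⟨Γ, c', h'⟩ := fhat_step n (by omega) m G c h
      exact ⟨m + 2, Γ, c', h'⟩


/-- Joining a graph in `F̂_k` with two new non-adjacent dominating
vertices, all new edges having pairwise distinct colors not appearing before, yields a
graph in `F̂_{k+1}`; in particular `f(k+1) ≤ f(k) + 2`. -/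
theorem FHat_extension :
    (∀ k : ℕ, 1 ≤ k → ∀ (V : Type) (L : SimpleGraph V) (c : Sym2 V → ℕ), FHat k L c →
      ∀ (Γ : SimpleGraph (V ⊕ Fin 2)) (c' : Sym2 (V ⊕ Fin 2) → ℕ),
        (∀ a b : V, Γ.Adj (Sum.inl a) (Sum.inl b) ↔ L.Adj a b) →
        (∀ (a : V) (i : Fin 2), Γ.Adj (Sum.inl a) (Sum.inr i)) →
        (∀ i j : Fin 2, ¬ Γ.Adj (Sum.inr i) (Sum.inr j)) →
        (∀ a b : V, L.Adj a b → c' s(Sum.inl a, Sum.inl b) = c s(a, b)) →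
        (∀ e₁ ∈ Γ.edgeSet, ∀ e₂ ∈ Γ.edgeSet,
          (∃ i : Fin 2, Sum.inr i ∈ e₁) → (∃ i : Fin 2, Sum.inr i ∈ e₂) →
          c' e₁ = c' e₂ → e₁ = e₂) →
        (∀ e₁ ∈ Γ.edgeSet, (∃ i : Fin 2, Sum.inr i ∈ e₁) →
          ∀ e₂ ∈ L.edgeSet, c' e₁ ≠ c e₂) →
        FHat (k + 1) Γ c') ∧
    (∀ k : ℕ, 1 ≤ k → fF (k + 1) ≤ fF k + 2) := by
  refine ⟨fhat_part1, ?_⟩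
  intro k hk
  have hne := fhat_nonempty k hk
  have hmem : ∃ (G : SimpleGraph (Fin (fF k))) (c : Sym2 (Fin (fF k)) → ℕ), FHat k G c :=
    Nat.sInf_mem hne
  obtain ⟨G, c, h⟩ := hmem
  obtain ⟨Γ, c', h'⟩ := fhat_step k hk (fF k) G c h
  exact Nat.sInf_le ⟨Γ, c', h'⟩
end

section
/- For every integer k ≥ 4, there exists an edge-colored graph in F̂_k with exactly k + ⌈(−1 + √(4k−3))/2⌉ vertices; consequently f(k) ≤ k + ⌈(−1 + √(4k−3))/2⌉. -/
open SimpleGraph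

variable {V : Type*} {W : Type*}

namespace FFUB

def PP (t : ℕ) := {p : Fin (t+1) × Fin (t+1) // p.1 < p.2}
instance (t : ℕ) : DecidableEq (PP t) := by unfold PP; infer_instance
instance (t : ℕ) : Fintype (PP t) := by unfold PP; infer_instance

def ePP (t : ℕ) : PP t ≃ (Σ b : Fin (t+1), Fin b.val) where
  toFun x := ⟨x.1.2, ⟨x.1.1, x.2⟩⟩
  invFun s := ⟨(⟨s.2.val, s.2.isLt.trans s.1.isLt⟩, s.1), s.2.isLt⟩
  left_inv x := by rfl
  right_inv s := by rfl

theorem card_PP (t : ℕ) : Fintype.card (PP t) = (t+1).choose 2 := by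
  rw [Fintype.card_congr (ePP t), Fintype.card_sigma]
  simp only [Fintype.card_fin]
  rw [show (∑ x : Fin (t+1), (x:ℕ)) = ∑ i ∈ Finset.range (t+1), i from
    (Finset.sum_range fun i => i).symm, Finset.sum_range_id, Nat.choose_two_right]

theorem two_mul_choose_two (t : ℕ) : 2 * ((t+1).choose 2) = t * (t+1) := by
  rw [Nat.choose_two_right]
  have he : 2 ∣ (t+1) * ((t+1) - 1) := by
    simpa [Nat.mul_comm] using (Nat.even_mul_succ_self t).two_dvd
  rw [Nat.mul_div_cancel' he, Nat.add_sub_cancel, Nat.mul_comm]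

structure Setup (k t : ℕ) where
  pi : Fin (k-1) → PP t
  xx : PP t → Fin (k-1)
  yy : PP t → Fin (k-1)
  hx : ∀ p, pi (xx p) = p
  hy : ∀ p, pi (yy p) = p
  hcov : ∀ v, xx (pi v) = v ∨ yy (pi v) = v

theorem setup_exists (k t : ℕ) (ht : 1 ≤ t) (hq1 : (t+1).choose 2 ≤ k-1)
    (hub : k-1 ≤ t*(t+1)) : Nonempty (Setup k t) := by
  classical
  set q := (t+1).choose 2 with hq
  have hq0 : 0 < q := Nat.choose_pos (by omega)
  have h2q : 2 * q = t * (t+1) := two_mul_choose_two t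
  have hk1 : 0 < k - 1 := lt_of_lt_of_le hq0 hq1
  have e : PP t ≃ Fin q := Fintype.equivFinOfCardEq (card_PP t)
  refine ⟨{
    pi := fun v => e.symm ⟨v.val % q, Nat.mod_lt _ hq0⟩
    xx := fun p => ⟨(e p).val, lt_of_lt_of_le (e p).isLt hq1⟩
    yy := fun p => if h : q + (e p).val < k-1 then ⟨q + (e p).val, h⟩ else
      ⟨(e p).val, lt_of_lt_of_le (e p).isLt hq1⟩
    hx := ?_, hy := ?_, hcov := ?_ }⟩
  · intro p
    have h1 : (e p).val % q = (e p).val := Nat.mod_eq_of_lt (e p).isLt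
    simp only [h1]
    rw [show (⟨(e p).val, _⟩ : Fin q) = e p from Fin.ext rfl, Equiv.symm_apply_apply]
  · intro p
    by_cases h : q + (e p).val < k-1
    · simp only [dif_pos h]
      have h1 : (q + (e p).val) % q = (e p).val := by
        rw [Nat.add_mod_left, Nat.mod_eq_of_lt (e p).isLt]
      simp only [h1]
      rw [show (⟨(e p).val, _⟩ : Fin q) = e p from Fin.ext rfl, Equiv.symm_apply_apply]
    · simp only [dif_neg h]
      have h1 : (e p).val % q = (e p).val := Nat.mod_eq_of_lt (e p).isLt
      simp only [h1]
      rw [show (⟨(e p).val, _⟩ : Fin q) = e p from Fin.ext rfl, Equiv.symm_apply_apply]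
  · intro v
    have hv2q : v.val < 2 * q := lt_of_lt_of_le v.isLt (by omega)
    by_cases hvq : v.val < q
    · left
      have h1 : v.val % q = v.val := Nat.mod_eq_of_lt hvq
      have h2 : e (e.symm ⟨v.val % q, Nat.mod_lt _ hq0⟩) = ⟨v.val % q, Nat.mod_lt _ hq0⟩ :=
        Equiv.apply_symm_apply _ _
      simp only [h2]
      exact Fin.ext (by simp [h1])
    · right
      have h1 : v.val % q = v.val - q := by
        rw [Nat.mod_eq_sub_mod (by omega), Nat.mod_eq_of_lt (by omega)]
      have h2 : e (e.symm ⟨v.val % q, Nat.mod_lt _ hq0⟩) = ⟨v.val % q, Nat.mod_lt _ hq0⟩ :=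
        Equiv.apply_symm_apply _ _
      simp only [h2]
      have h3 : q + (⟨v.val % q, Nat.mod_lt _ hq0⟩ : Fin q).val < k - 1 := by
        simp only [h1]; omega
      rw [dif_pos h3]
      exact Fin.ext (by simp only [h1]; omega)

abbrev WW (k t : ℕ) := Fin (k-1) ⊕ Fin (t+1)

def enc (k t : ℕ) : WW k t → ℕ := Sum.elim Fin.val (fun a => (k-1) + a.val)

theorem enc_inj (k t : ℕ) : Function.Injective (enc k t) := by
  rintro (u|u) (w|w) h <;> simp only [enc, Sum.elim_inl, Sum.elim_inr] at h
  · exact congrArg Sum.inl (Fin.ext h)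
  · exact absurd h (by have := u.isLt; omega)
  · exact absurd h (by have := w.isLt; omega)
  · exact congrArg Sum.inr (Fin.ext (by omega))

def FF (k t : ℕ) (u w : WW k t) : ℕ :=
  2 * Nat.pair (min (enc k t u) (enc k t w)) (max (enc k t u) (enc k t w))

theorem FF_symm (k t : ℕ) (u w : WW k t) : FF k t u w = FF k t w u := by
  simp [FF, min_comm, max_comm]

theorem FF_inj {k t : ℕ} {u w u' w' : WW k t} (h : FF k t u w = FF k t u' w') :
    s(u, w) = s(u', w') := by
  simp only [FF] at h
  have hd : (enc k t u = enc k t u' ∧ enc k t w = enc k t w') ∨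
      (enc k t u = enc k t w' ∧ enc k t w = enc k t u') := by
    have h1 : Nat.pair (min (enc k t u) (enc k t w)) (max (enc k t u) (enc k t w))
        = Nat.pair (min (enc k t u') (enc k t w')) (max (enc k t u') (enc k t w')) := by
      omega
    obtain ⟨h3, h4⟩ := Nat.pair_eq_pair.mp h1
    omega
  rcases hd with ⟨h1, h2⟩ | ⟨h1, h2⟩
  · rw [enc_inj k t h1, enc_inj k t h2]
  · rw [enc_inj k t h1, enc_inj k t h2, Sym2.eq_swap]

def GG (t : ℕ) (p : PP t) : ℕ := 2 * Nat.pair p.val.1.val p.val.2.val + 1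

theorem GG_inj {t : ℕ} {p p' : PP t} (h : GG t p = GG t p') : p = p' := by
  simp only [GG] at h
  have h2 := Nat.pair_eq_pair.mp (by omega : Nat.pair p.val.1.val p.val.2.val
    = Nat.pair p'.val.1.val p'.val.2.val)
  exact Subtype.ext (Prod.ext (Fin.ext h2.1) (Fin.ext h2.2))

theorem FF_ne_GG (k t : ℕ) (u w : WW k t) (p : PP t) : FF k t u w ≠ GG t p := by
  simp only [FF, GG]; omega

variable {k t : ℕ}

open Classical in
noncomputable def CC (S : Setup k t) : WW k t → WW k t → ℕ := fun u w =>
  match u, w with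
  | Sum.inl v, Sum.inr a =>
    if (a = (S.pi v).val.1 ∧ S.xx (S.pi v) = v) ∨ (a = (S.pi v).val.2 ∧ S.yy (S.pi v) = v)
    then GG t (S.pi v) else FF k t u w
  | Sum.inr a, Sum.inl v =>
    if (a = (S.pi v).val.1 ∧ S.xx (S.pi v) = v) ∨ (a = (S.pi v).val.2 ∧ S.yy (S.pi v) = v)
    then GG t (S.pi v) else FF k t u w
  | u, w => FF k t u w

theorem CC_symm (S : Setup k t) (u w : WW k t) : CC S u w = CC S w u := by
  rcases u with u | u <;> rcases w with w | w <;> simp only [CC] <;>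
    first
    | rw [FF_symm]
    | (split_ifs <;> [rfl; rw [FF_symm]])

noncomputable def col (S : Setup k t) : Sym2 (WW k t) → ℕ :=
  Sym2.lift ⟨CC S, CC_symm S⟩

theorem col_mk (S : Setup k t) (u w : WW k t) : col S s(u, w) = CC S u w := rfl

variable {k t : ℕ}

theorem col_gamma1 (S : Setup k t) (p : PP t) :
    col S s(Sum.inl (S.xx p), Sum.inr p.val.1) = GG t p := by
  rw [col_mk]
  show (if _ then _ else _) = _
  rw [if_pos, S.hx p]
  rw [S.hx p]
  exact Or.inl ⟨rfl, rfl⟩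

theorem col_gamma2 (S : Setup k t) (p : PP t) :
    col S s(Sum.inl (S.yy p), Sum.inr p.val.2) = GG t p := by
  rw [col_mk]
  show (if _ then _ else _) = _
  rw [if_pos, S.hy p]
  rw [S.hy p]
  exact Or.inr ⟨rfl, rfl⟩

theorem col_cases (S : Setup k t) (u w : WW k t) :
    col S s(u, w) = FF k t u w ∨
    ∃ v a, s(u, w) = s(Sum.inl v, Sum.inr a) ∧ col S s(u, w) = GG t (S.pi v) ∧
      ((a = (S.pi v).val.1 ∧ S.xx (S.pi v) = v) ∨ (a = (S.pi v).val.2 ∧ S.yy (S.pi v) = v)) := by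
  rw [col_mk]
  rcases u with u | u <;> rcases w with w | w
  · exact Or.inl rfl
  · by_cases hc : (w = (S.pi u).val.1 ∧ S.xx (S.pi u) = u) ∨
        (w = (S.pi u).val.2 ∧ S.yy (S.pi u) = u)
    · exact Or.inr ⟨u, w, rfl, if_pos hc, hc⟩
    · exact Or.inl (if_neg hc)
  · by_cases hc : (u = (S.pi w).val.1 ∧ S.xx (S.pi w) = w) ∨
        (u = (S.pi w).val.2 ∧ S.yy (S.pi w) = w)
    · exact Or.inr ⟨w, u, Sym2.eq_swap, if_pos hc, hc⟩
    · exact Or.inl (if_neg hc)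
  · exact Or.inl rfl

theorem eq_gamma_of_col_eq_GG (S : Setup k t) {u w : WW k t} {p : PP t}
    (h : col S s(u, w) = GG t p) :
    s(u, w) = s(Sum.inl (S.xx p), Sum.inr p.val.1) ∨
    s(u, w) = s(Sum.inl (S.yy p), Sum.inr p.val.2) := by
  rcases col_cases S u w with hf | ⟨v, a, he, hg, hor⟩
  · exact absurd (hf ▸ h) (FF_ne_GG k t u w p)
  · rw [h] at hg
    have hp : S.pi v = p := GG_inj hg.symm
    rw [hp] at hor
    rcases hor with ⟨h1, h2⟩ | ⟨h1, h2⟩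
    · left; rw [he, h1, ← h2]
    · right; rw [he, h1, ← h2]

theorem classify (S : Setup k t) {e e' : Sym2 (WW k t)} (h : col S e = col S e') :
    e = e' ∨ ∃ p : PP t,
      (e = s(Sum.inl (S.xx p), Sum.inr p.val.1) ∧ e' = s(Sum.inl (S.yy p), Sum.inr p.val.2)) ∨
      (e = s(Sum.inl (S.yy p), Sum.inr p.val.2) ∧ e' = s(Sum.inl (S.xx p), Sum.inr p.val.1)) := by
  induction e using Sym2.ind with
  | _ u w =>
  induction e' using Sym2.ind with
  | _ u' w' =>
  rcases col_cases S u w with hf | ⟨v, a, he, hg, _⟩ <;>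
    rcases col_cases S u' w' with hf' | ⟨v', a', he', hg', _⟩
  · exact Or.inl (FF_inj (hf ▸ hf' ▸ h))
  · rw [h, hg'] at hf; exact absurd hf.symm (FF_ne_GG k t u w _)
  · rw [← h, hg] at hf'; exact absurd hf'.symm (FF_ne_GG k t u' w' _)
  · have hpp : S.pi v = S.pi v' := GG_inj (by rw [← hg, ← hg', h])
    set p := S.pi v with hp
    rcases eq_gamma_of_col_eq_GG S (hg : col S s(u,w) = GG t p) with h1 | h1 <;>
      rcases eq_gamma_of_col_eq_GG S (hg'.trans (congrArg (GG t) hpp.symm) :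
        col S s(u',w') = GG t p) with h2 | h2
    · exact Or.inl (h1.trans h2.symm)
    · exact Or.inr ⟨p, Or.inl ⟨h1, h2⟩⟩
    · exact Or.inr ⟨p, Or.inr ⟨h1, h2⟩⟩
    · exact Or.inl (h1.trans h2.symm)

theorem master (S : Setup k t) {m : ℕ} (g : Fin m ↪ WW k t)
    (hg : ∀ p : PP t, (∀ i, g i ≠ Sum.inr p.val.1) ∨ (∀ i, g i ≠ Sum.inr p.val.2) ∨
      (∀ i, g i ≠ Sum.inl (S.xx p)) ∨ (∀ i, g i ≠ Sum.inl (S.yy p))) :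
    ∀ i j i' j', i ≠ j → i' ≠ j' →
      col S s(g i, g j) = col S s(g i', g j') → s(i, j) = s(i', j') := by
  intro i j i' j' hij hij' hcol
  rcases classify S hcol with he | ⟨p, hp⟩
  · rw [Sym2.eq_iff] at he ⊢
    rcases he with ⟨h1, h2⟩ | ⟨h1, h2⟩
    · exact Or.inl ⟨g.injective h1, g.injective h2⟩
    · exact Or.inr ⟨g.injective h1, g.injective h2⟩
  · exfalso
    have hmem : (∃ i0, g i0 = Sum.inr p.val.1) ∧ (∃ i0, g i0 = Sum.inr p.val.2) ∧
        (∃ i0, g i0 = Sum.inl (S.xx p)) ∧ (∃ i0, g i0 = Sum.inl (S.yy p)) := by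
      rcases hp with ⟨h1, h2⟩ | ⟨h1, h2⟩ <;> rw [Sym2.eq_iff] at h1 h2 <;>
        refine ⟨?_, ?_, ?_, ?_⟩ <;> tauto
    obtain ⟨⟨i1, hi1⟩, ⟨i2, hi2⟩, ⟨i3, hi3⟩, ⟨i4, hi4⟩⟩ := hmem
    rcases hg p with h | h | h | h
    exacts [h i1 hi1, h i2 hi2, h i3 hi3, h i4 hi4]

/-- The clique `R ∪ {d}`. -/
def cliqueD (hk : 4 ≤ k) (d : Fin (t+1)) : Fin k ↪ WW k t where
  toFun i := if h : i.val < k-1 then Sum.inl ⟨i.val, h⟩ else Sum.inr d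
  inj' := by
    intro i j hij
    by_cases h1 : i.val < k-1 <;> by_cases h2 : j.val < k-1 <;>
      simp only [dif_pos, dif_neg, h1, h2] at hij
    · exact Fin.ext (congrArg Fin.val (Sum.inl.inj hij) : _)
    · exact absurd hij (by simp)
    · exact absurd hij (by simp)
    · exact Fin.ext (by have := i.isLt; have := j.isLt; omega)

theorem cliqueD_inr {hk : 4 ≤ k} {d a : Fin (t+1)} {i : Fin k}
    (h : cliqueD hk d i = Sum.inr a) : a = d := by
  have h' : (if h : i.val < k-1 then (Sum.inl ⟨i.val, h⟩ : WW k t) else Sum.inr d) = Sum.inr a := h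
  by_cases h1 : i.val < k-1
  · rw [dif_pos h1] at h'; exact absurd h' (by simp)
  · rw [dif_neg h1] at h'; exact (Sum.inr.inj h').symm

theorem cliqueD_inl {hk : 4 ≤ k} {d : Fin (t+1)} (v : Fin (k-1)) :
    ∃ i, cliqueD hk d i = Sum.inl v := by
  refine ⟨⟨v.val, by have := v.isLt; omega⟩, ?_⟩
  show (if h : v.val < k-1 then (Sum.inl ⟨v.val, h⟩ : WW k t) else Sum.inr d) = Sum.inl v
  rw [dif_pos v.isLt]

theorem cliqueD_spec (S : Setup k t) (hk : 4 ≤ k) (d : Fin (t+1)) (p : PP t) :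
    (∀ i, cliqueD hk d i ≠ Sum.inr p.val.1) ∨ (∀ i, cliqueD hk d i ≠ Sum.inr p.val.2) ∨
    (∀ i, cliqueD hk d i ≠ Sum.inl (S.xx p)) ∨ (∀ i, cliqueD hk d i ≠ Sum.inl (S.yy p)) := by
  by_cases h1 : p.val.1 = d
  · refine Or.inr (Or.inl fun i h => ?_)
    have h2 := cliqueD_inr h
    have h3 := p.2
    rw [h1, ← h2] at h3
    exact lt_irrefl _ h3
  · exact Or.inl fun i h => h1 (cliqueD_inr h)

def rvFun (S : Setup k t) (hk : 4 ≤ k) (r : Fin (k-1)) (i : Fin k) : WW k t :=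
  if h : i.val < k-2 then
    (if i.val < r.val then Sum.inl ⟨i.val, by omega⟩ else Sum.inl ⟨i.val+1, by omega⟩)
  else if i.val = k-2 then Sum.inr (S.pi r).val.1 else Sum.inr (S.pi r).val.2

theorem rvFun_lt (S : Setup k t) (hk : 4 ≤ k) (r : Fin (k-1)) (i : Fin k)
    (h : i.val < k-2) :
    ∃ v : Fin (k-1), rvFun S hk r i = Sum.inl v ∧ v ≠ r ∧
      v.val = (if i.val < r.val then i.val else i.val + 1) := by
  rw [rvFun, dif_pos h]
  by_cases h2 : i.val < r.val
  · exact ⟨_, by rw [if_pos h2], fun hh => by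
      have := congrArg Fin.val hh; simp at this; omega, by rw [if_pos h2]⟩
  · exact ⟨_, by rw [if_neg h2], fun hh => by
      have := congrArg Fin.val hh; simp at this; omega, by rw [if_neg h2]⟩

theorem rvFun_ge (S : Setup k t) (hk : 4 ≤ k) (r : Fin (k-1)) (i : Fin k)
    (h : ¬ i.val < k-2) :
    (i.val = k-2 ∧ rvFun S hk r i = Sum.inr (S.pi r).val.1) ∨
    (i.val = k-1 ∧ rvFun S hk r i = Sum.inr (S.pi r).val.2) := by
  rw [rvFun, dif_neg h]
  by_cases h2 : i.val = k-2
  · exact Or.inl ⟨h2, by rw [if_pos h2]⟩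
  · exact Or.inr ⟨by have := i.isLt; omega, by rw [if_neg h2]⟩

def cliqueRV (S : Setup k t) (hk : 4 ≤ k) (r : Fin (k-1)) : Fin k ↪ WW k t where
  toFun := rvFun S hk r
  inj' := by
    intro i j hij
    have hq := (S.pi r).2
    by_cases h1 : i.val < k-2 <;> by_cases h2 : j.val < k-2
    · obtain ⟨v, hv1, _, hv3⟩ := rvFun_lt S hk r i h1
      obtain ⟨w, hw1, _, hw3⟩ := rvFun_lt S hk r j h2
      rw [hv1, hw1] at hij
      have := congrArg Fin.val (Sum.inl.inj hij)
      rw [hv3, hw3] at this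
      split_ifs at this <;> exact Fin.ext (by omega)
    · obtain ⟨v, hv1, _, _⟩ := rvFun_lt S hk r i h1
      rcases rvFun_ge S hk r j h2 with ⟨_, hw⟩ | ⟨_, hw⟩ <;> rw [hv1, hw] at hij <;>
        exact absurd hij (by simp)
    · obtain ⟨w, hw1, _, _⟩ := rvFun_lt S hk r j h2
      rcases rvFun_ge S hk r i h1 with ⟨_, hv⟩ | ⟨_, hv⟩ <;> rw [hv, hw1] at hij <;>
        exact absurd hij (by simp)
    · rcases rvFun_ge S hk r i h1 with ⟨hi1, hv⟩ | ⟨hi1, hv⟩ <;>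
        rcases rvFun_ge S hk r j h2 with ⟨hj1, hw⟩ | ⟨hj1, hw⟩ <;>
          rw [hv, hw] at hij
      · exact Fin.ext (by omega)
      · exact absurd (congrArg Fin.val (Sum.inr.inj hij) : _) (by omega)
      · exact absurd (congrArg Fin.val (Sum.inr.inj hij) : _) (by omega)
      · exact Fin.ext (by omega)

theorem cliqueRV_ne (S : Setup k t) (hk : 4 ≤ k) (r : Fin (k-1)) (i : Fin k) :
    cliqueRV S hk r i ≠ Sum.inl r := by
  intro h
  have h' : rvFun S hk r i = Sum.inl r := h
  by_cases h1 : i.val < k-2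
  · obtain ⟨v, hv1, hv2, _⟩ := rvFun_lt S hk r i h1
    rw [hv1] at h'
    exact hv2 (Sum.inl.inj h')
  · rcases rvFun_ge S hk r i h1 with ⟨_, hv⟩ | ⟨_, hv⟩ <;> rw [hv] at h' <;>
      exact absurd h' (by simp)

theorem cliqueRV_inr (S : Setup k t) {hk : 4 ≤ k} {r : Fin (k-1)} {a : Fin (t+1)} {i : Fin k}
    (h : cliqueRV S hk r i = Sum.inr a) : a = (S.pi r).val.1 ∨ a = (S.pi r).val.2 := by
  have h' : rvFun S hk r i = Sum.inr a := h
  by_cases h1 : i.val < k-2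
  · obtain ⟨v, hv1, _, _⟩ := rvFun_lt S hk r i h1
    rw [hv1] at h'
    exact absurd h' (by simp)
  · rcases rvFun_ge S hk r i h1 with ⟨_, hv⟩ | ⟨_, hv⟩ <;> rw [hv] at h'
    · exact Or.inl (Sum.inr.inj h').symm
    · exact Or.inr (Sum.inr.inj h').symm

theorem cliqueRV_inl (S : Setup k t) {hk : 4 ≤ k} {r : Fin (k-1)} (v : Fin (k-1)) (hv : v ≠ r) :
    ∃ i, cliqueRV S hk r i = Sum.inl v := by
  have hvr : v.val ≠ r.val := fun h => hv (Fin.ext h)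
  have hv1 := v.isLt; have hr1 := r.isLt
  by_cases h : v.val < r.val
  · refine ⟨⟨v.val, by omega⟩, ?_⟩
    obtain ⟨w, hw1, _, hw3⟩ := rvFun_lt S hk r ⟨v.val, by omega⟩ (by show v.val < k-2; omega)
    have hw3' : w.val = if v.val < r.val then v.val else v.val + 1 := hw3
    rw [if_pos h] at hw3'
    have hwv : w = v := Fin.ext hw3'
    exact hwv ▸ hw1
  · refine ⟨⟨v.val - 1, by omega⟩, ?_⟩
    obtain ⟨w, hw1, _, hw3⟩ := rvFun_lt S hk r ⟨v.val - 1, by omega⟩ (by show v.val - 1 < k-2; omega)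
    have hw3' : w.val = if v.val - 1 < r.val then v.val - 1 else v.val - 1 + 1 := hw3
    rw [if_neg (by omega)] at hw3'
    have hwv : w = v := Fin.ext (by omega)
    exact hwv ▸ hw1

theorem cliqueRV_spec (S : Setup k t) (hk : 4 ≤ k) (r : Fin (k-1)) (p : PP t) :
    (∀ i, cliqueRV S hk r i ≠ Sum.inr p.val.1) ∨ (∀ i, cliqueRV S hk r i ≠ Sum.inr p.val.2) ∨
    (∀ i, cliqueRV S hk r i ≠ Sum.inl (S.xx p)) ∨ (∀ i, cliqueRV S hk r i ≠ Sum.inl (S.yy p)) := by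
  by_cases hp : p = S.pi r
  · subst hp
    rcases S.hcov r with h | h
    · refine Or.inr (Or.inr (Or.inl fun i hh => ?_))
      rw [h] at hh
      exact cliqueRV_ne S hk r i hh
    · refine Or.inr (Or.inr (Or.inr fun i hh => ?_))
      rw [h] at hh
      exact cliqueRV_ne S hk r i hh
  · have hq := (S.pi r).2
    have hp2 := p.2
    by_cases hA : p.val.1 = (S.pi r).val.1 ∨ p.val.1 = (S.pi r).val.2
    · by_cases hB : p.val.2 = (S.pi r).val.1 ∨ p.val.2 = (S.pi r).val.2
      · exfalso
        rcases hA with hA | hA <;> rcases hB with hB | hB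
        · rw [hA, hB] at hp2; exact lt_irrefl _ hp2
        · exact hp (Subtype.ext (Prod.ext hA hB))
        · rw [hA, hB] at hp2; exact lt_asymm hp2 hq
        · rw [hA, hB] at hp2; exact lt_irrefl _ hp2
      · exact Or.inr (Or.inl fun i hh => hB (cliqueRV_inr S hh))
    · exact Or.inl fun i hh => hA (cliqueRV_inr S hh)

theorem part1 (S : Setup k t) (hk : 4 ≤ k) :
    ¬ HasRainbowKClique (⊤ : SimpleGraph (WW k t)) (col S) (k+1) ∅ ∅ := by
  classical
  rintro ⟨f, -, -, -, hrb⟩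
  -- the sets of hit vertices
  set Rin : Finset (Fin (k-1)) := Finset.univ.filter (fun v => ∃ i, f i = Sum.inl v) with hRin
  set Din : Finset (Fin (t+1)) := Finset.univ.filter (fun a => ∃ i, f i = Sum.inr a) with hDin
  have hcards : Rin.card + Din.card = k + 1 := by
    have h1 : (Finset.univ : Finset (Fin (k+1))).card = k + 1 := by simp
    have h2 : (Finset.univ.image f).card = k + 1 := by
      rw [Finset.card_image_of_injective _ f.injective, h1]
    have h3 : Finset.univ.image f = Rin.image Sum.inl ∪ Din.image Sum.inr := by
      ext x
      rcases x with v | a <;>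
        simp [hRin, hDin, Finset.mem_image, Finset.mem_union, eq_comm]
    rw [h3] at h2
    rw [Finset.card_union_of_disjoint (Finset.disjoint_left.mpr (by
      rintro x hx hy
      obtain ⟨v, -, rfl⟩ := Finset.mem_image.mp hx
      obtain ⟨a, -, ha⟩ := Finset.mem_image.mp hy
      exact absurd ha (by simp)))] at h2
    rw [Finset.card_image_of_injective _ Sum.inl_injective,
      Finset.card_image_of_injective _ Sum.inr_injective] at h2
    omega
  have hRle : Rin.card ≤ k - 1 := le_trans (Finset.card_le_univ _) (by simp)
  have hm2 : 2 ≤ Din.card := by omega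
  by_cases hgood : ∃ p : PP t, p.val.1 ∈ Din ∧ p.val.2 ∈ Din ∧ S.xx p ∈ Rin ∧ S.yy p ∈ Rin
  · obtain ⟨p, hp1, hp2, hp3, hp4⟩ := hgood
    simp only [hDin, hRin, Finset.mem_filter, Finset.mem_univ, true_and] at hp1 hp2 hp3 hp4
    obtain ⟨i1, hi1⟩ := hp1
    obtain ⟨i3, hi3⟩ := hp2
    obtain ⟨i2, hi2⟩ := hp3
    obtain ⟨i4, hi4⟩ := hp4
    have e1 : col S s(f i2, f i1) = GG t p := by rw [hi1, hi2]; exact col_gamma1 S p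
    have e2 : col S s(f i4, f i3) = GG t p := by rw [hi3, hi4]; exact col_gamma2 S p
    have h21 : i2 ≠ i1 := fun h => by rw [h, hi1] at hi2; exact absurd hi2 (by simp)
    have h43 : i4 ≠ i3 := fun h => by rw [h, hi3] at hi4; exact absurd hi4 (by simp)
    have := hrb i2 i1 i4 i3 h21 h43 (e1.trans e2.symm)
    rw [Sym2.eq_iff] at this
    have hpp := p.2
    rcases this with ⟨hA, hB⟩ | ⟨hA, hB⟩
    · have hi1' : f i3 = Sum.inr p.val.1 := hB ▸ hi1
      have : (p.val.1 : Fin (t+1)) = p.val.2 := Sum.inr.inj (hi1'.symm.trans hi3)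
      rw [this] at hpp
      exact lt_irrefl _ hpp
    · have hi2' : f i3 = Sum.inl (S.xx p) := hA ▸ hi2
      exact absurd (hi2'.symm.trans hi3) (by simp)
  · push_neg at hgood
    set Rout : Finset (Fin (k-1)) :=
      Finset.univ.filter (fun v => ¬ ∃ i, f i = Sum.inl v) with hRout
    have hRoutcard : Rin.card + Rout.card = k - 1 := by
      rw [hRin, hRout]
      rw [Finset.card_filter_add_card_filter_not]
      simp
    -- witness map
    have hwit : ∀ a b : Fin (t+1), a ∈ Din → b ∈ Din → a ≠ b →
        ∃ v ∈ Rout, ∃ p : PP t, S.pi v = p ∧ (p.val.1 = a ∨ p.val.1 = b) ∧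
          (p.val.2 = a ∨ p.val.2 = b) := by
      intro a b ha hb hab
      have hab' : a < b ∨ b < a := lt_or_gt_of_ne hab
      have key : ∀ p : PP t, p.val.1 ∈ Din → p.val.2 ∈ Din →
          ∃ v ∈ Rout, S.pi v = p := by
        intro p q1 q2
        by_cases hx : S.xx p ∈ Rin
        · have hy := hgood p q1 q2 hx
          refine ⟨S.yy p, ?_, S.hy p⟩
          simp only [hRout, Finset.mem_filter, Finset.mem_univ, true_and]
          simpa [hRin] using hy
        · refine ⟨S.xx p, ?_, S.hx p⟩
          simp only [hRout, Finset.mem_filter, Finset.mem_univ, true_and]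
          simpa [hRin] using hx
      rcases hab' with h | h
      · obtain ⟨v, hv, hp⟩ := key ⟨(a, b), h⟩ ha hb
        exact ⟨v, hv, ⟨(a, b), h⟩, hp, Or.inl rfl, Or.inr rfl⟩
      · obtain ⟨v, hv, hp⟩ := key ⟨(b, a), h⟩ hb ha
        exact ⟨v, hv, ⟨(b, a), h⟩, hp, Or.inr rfl, Or.inl rfl⟩
    -- counting
    have hcount : Din.offDiag.card ≤ 2 * Rout.card := by
      have hmap : ∀ z ∈ Din.offDiag, ∃ v ∈ Rout,
          ((S.pi v).val.1 = z.1 ∨ (S.pi v).val.1 = z.2) ∧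
          ((S.pi v).val.2 = z.1 ∨ (S.pi v).val.2 = z.2) := by
        rintro ⟨a, b⟩ hz
        rw [Finset.mem_offDiag] at hz
        obtain ⟨v, hv, p, hp, h1, h2⟩ := hwit a b hz.1 hz.2.1 hz.2.2
        exact ⟨v, hv, by rw [hp]; exact h1, by rw [hp]; exact h2⟩
      choose wit hwit1 hwit2 hwit3 using hmap
      have hk1 : 0 < k - 1 := by omega
      set wmap : Fin (t+1) × Fin (t+1) → Fin (k-1) := fun z =>
        if h : z ∈ Din.offDiag then wit z h else ⟨0, hk1⟩ with hwmap
      refine Finset.card_le_mul_card_image_of_maps_to (f := wmap) (t := Rout) ?_ 2 ?_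
      · intro z hz
        show (if h : z ∈ Din.offDiag then wit z h else _) ∈ Rout
        rw [dif_pos hz]
        exact hwit1 z hz
      · intro v _
        have hsub : {z ∈ Din.offDiag | wmap z = v} ⊆
            {((S.pi v).val.1, (S.pi v).val.2), ((S.pi v).val.2, (S.pi v).val.1)} := by
          intro z hzf
          rw [Finset.mem_filter] at hzf
          obtain ⟨hz, hzv⟩ := hzf
          have hzv' : wit z hz = v := by
            have : wmap z = wit z hz := dif_pos hz
            rw [← this, hzv]
          have h2 := hwit2 z hz
          have h3 := hwit3 z hz
          rw [hzv'] at h2 h3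
          have hne : z.1 ≠ z.2 := (Finset.mem_offDiag.mp hz).2.2
          have hlt := (S.pi v).2
          simp only [Finset.mem_insert, Finset.mem_singleton]
          rcases h2 with h2 | h2
          · rcases h3 with h3 | h3
            · exact absurd (h2.trans h3.symm) (ne_of_lt hlt)
            · left; rw [Prod.ext_iff]; exact ⟨h2.symm, h3.symm⟩
          · rcases h3 with h3 | h3
            · right; rw [Prod.ext_iff]; exact ⟨h3.symm, h2.symm⟩
            · have : (S.pi v).val.1 = (S.pi v).val.2 := h2.trans h3.symm
              rw [this] at hlt
              exact absurd hlt (lt_irrefl _)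
        refine le_trans (Finset.card_le_card hsub) ?_
        exact (Finset.card_insert_le _ _).trans (by simp)
    have hDoff : Din.offDiag.card = Din.card * Din.card - Din.card := by
      rw [Finset.offDiag_card]
    have hfinal : Din.card * Din.card - Din.card ≤ 2 * Rout.card := hDoff ▸ hcount
    have hmul : 2 * (Din.card - 1) ≤ Din.card * (Din.card - 1) :=
      Nat.mul_le_mul_right _ hm2
    have hmm : Din.card * (Din.card - 1) = Din.card * Din.card - Din.card := by
      rw [Nat.mul_sub, Nat.mul_one]
    omega

theorem hasclique_of (S : Setup k t) (g : Fin k ↪ WW k t)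
    (hspec : ∀ p : PP t, (∀ i, g i ≠ Sum.inr p.val.1) ∨ (∀ i, g i ≠ Sum.inr p.val.2) ∨
      (∀ i, g i ≠ Sum.inl (S.xx p)) ∨ (∀ i, g i ≠ Sum.inl (S.yy p)))
    (A : Set (WW k t)) (hA : ∀ i, g i ∉ A) (C : Set ℕ)
    (hC : ∀ i j, i ≠ j → col S s(g i, g j) ∉ C) :
    HasRainbowKClique (⊤ : SimpleGraph (WW k t)) (col S) k A C :=
  ⟨g, hA, fun i j hij => by simp only [SimpleGraph.top_adj]; exact g.injective.ne hij,
    hC, master S g hspec⟩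

theorem part2 (S : Setup k t) (hk : 4 ≤ k) (ht : 1 ≤ t) :
    ∀ v : WW k t, HasRainbowKClique (⊤ : SimpleGraph (WW k t)) (col S) k {v} ∅ := by
  intro v
  rcases v with r | d
  · refine hasclique_of S (cliqueRV S hk r) (cliqueRV_spec S hk r) _ ?_ _ (by simp)
    intro i h
    rw [Set.mem_singleton_iff] at h
    exact cliqueRV_ne S hk r i h
  · obtain ⟨d', hd'⟩ : ∃ d' : Fin (t+1), d' ≠ d := by
      refine ⟨if d.val = 0 then ⟨1, by omega⟩ else ⟨0, by omega⟩, ?_⟩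
      split_ifs with h
      · intro hh; have := congrArg Fin.val hh; simp only [] at this; omega
      · intro hh; have := congrArg Fin.val hh; simp only [] at this; omega
    refine hasclique_of S (cliqueD hk d') (cliqueD_spec S hk d') _ ?_ _ (by simp)
    intro i h
    rw [Set.mem_singleton_iff] at h
    exact hd' (cliqueD_inr h).symm

theorem part3 (S : Setup k t) (hk : 4 ≤ k) (ht : 2 ≤ t) :
    ∀ col0 : ℕ, HasRainbowKClique (⊤ : SimpleGraph (WW k t)) (col S) k ∅ {col0} := by
  intro col0
  have hk1 : 0 < k - 1 := by omega
  by_cases hB : ∃ p : PP t, col0 = GG t p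
  · obtain ⟨p, rfl⟩ := hB
    obtain ⟨d, hd1, hd2⟩ : ∃ d : Fin (t+1), d ≠ p.val.1 ∧ d ≠ p.val.2 := by
      by_contra hcon
      push_neg at hcon
      have hall : ∀ d : Fin (t+1), d = p.val.1 ∨ d = p.val.2 := by
        intro d
        by_cases h : d = p.val.1
        · exact Or.inl h
        · exact Or.inr (hcon d h)
      have hsub : (Finset.univ : Finset (Fin (t+1))) ⊆ {p.val.1, p.val.2} := by
        intro d _
        rcases hall d with h | h <;> simp [h]
      have := Finset.card_le_card hsub
      have h2 : ({p.val.1, p.val.2} : Finset (Fin (t+1))).card ≤ 2 :=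
        (Finset.card_insert_le _ _).trans (by simp)
      simp [Finset.card_univ] at this
      omega
    refine hasclique_of S (cliqueD hk d) (cliqueD_spec S hk d) _ (by simp) _ ?_
    intro i j hij
    rw [Set.mem_singleton_iff]
    rcases col_cases S (cliqueD hk d i) (cliqueD hk d j) with hf | ⟨v, a, he, hg, hor⟩
    · rw [hf]; exact FF_ne_GG k t _ _ p
    · rw [hg]
      intro hgg
      have hpv : S.pi v = p := GG_inj hgg
      have hin : (cliqueD hk d) i = Sum.inr a ∨ (cliqueD hk d) j = Sum.inr a := by
        rw [Sym2.eq_iff] at he; tauto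
      have had : a = d := by rcases hin with h | h <;> exact cliqueD_inr h
      rcases hor with ⟨h1, -⟩ | ⟨h1, -⟩ <;> rw [hpv] at h1
      · exact hd1 (by rw [← had, h1])
      · exact hd2 (by rw [← had, h1])
  by_cases hA1 : ∃ w w' : Fin (k-1), w ≠ w' ∧ col0 = FF k t (Sum.inl w) (Sum.inl w')
  · obtain ⟨w, w', hww, rfl⟩ := hA1
    refine hasclique_of S (cliqueRV S hk w) (cliqueRV_spec S hk w) _ (by simp) _ ?_
    intro i j hij
    rw [Set.mem_singleton_iff]
    rcases col_cases S (cliqueRV S hk w i) (cliqueRV S hk w j) with hf | ⟨v, a, he, hg, hor⟩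
    · rw [hf]
      intro hgg
      have := FF_inj hgg
      rw [Sym2.eq_iff] at this
      rcases this with ⟨h1, -⟩ | ⟨-, h1⟩ <;> exact cliqueRV_ne S hk w _ h1
    · rw [hg]; exact (FF_ne_GG k t _ _ _).symm
  by_cases hA2 : ∃ (w : Fin (k-1)) (d0 : Fin (t+1)), col0 = FF k t (Sum.inl w) (Sum.inr d0)
  · obtain ⟨w, d0, rfl⟩ := hA2
    obtain ⟨d, hd⟩ : ∃ d : Fin (t+1), d ≠ d0 := by
      refine ⟨if d0.val = 0 then ⟨1, by omega⟩ else ⟨0, by omega⟩, ?_⟩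
      split_ifs with h
      · intro hh; have := congrArg Fin.val hh; simp only [] at this; omega
      · intro hh; have := congrArg Fin.val hh; simp only [] at this; omega
    refine hasclique_of S (cliqueD hk d) (cliqueD_spec S hk d) _ (by simp) _ ?_
    intro i j hij
    rw [Set.mem_singleton_iff]
    rcases col_cases S (cliqueD hk d i) (cliqueD hk d j) with hf | ⟨v, a, he, hg, hor⟩
    · rw [hf]
      intro hgg
      have := FF_inj hgg
      rw [Sym2.eq_iff] at this
      rcases this with ⟨-, h1⟩ | ⟨h1, -⟩ <;> exact hd (cliqueD_inr h1).symm
    · rw [hg]; exact (FF_ne_GG k t _ _ _).symm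
  by_cases hA3 : ∃ d0 d0' : Fin (t+1), col0 = FF k t (Sum.inr d0) (Sum.inr d0')
  · obtain ⟨d0, d0', rfl⟩ := hA3
    have ht0 : 0 < t + 1 := by omega
    refine hasclique_of S (cliqueD hk (⟨0, ht0⟩ : Fin (t+1)))
      (cliqueD_spec S hk _) _ (by simp) _ ?_
    intro i j hij
    rw [Set.mem_singleton_iff]
    rcases col_cases S (cliqueD hk (⟨0, ht0⟩ : Fin (t+1)) i)
        (cliqueD hk (⟨0, ht0⟩ : Fin (t+1)) j) with hf | ⟨v, a, he, hg, hor⟩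
    · rw [hf]
      intro hgg
      have := FF_inj hgg
      rw [Sym2.eq_iff] at this
      have hii : cliqueD hk (⟨0, ht0⟩ : Fin (t+1)) i = cliqueD hk (⟨0, ht0⟩ : Fin (t+1)) j := by
        rcases this with ⟨h1, h2⟩ | ⟨h1, h2⟩ <;>
          rw [h1, h2, cliqueD_inr h1, cliqueD_inr h2]
      exact hij ((cliqueD hk _).injective hii)
    · rw [hg]; exact (FF_ne_GG k t _ _ _).symm
  · have ht0 : 0 < t + 1 := by omega
    refine hasclique_of S (cliqueD hk (⟨0, ht0⟩ : Fin (t+1))) (cliqueD_spec S hk _) _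
      (by simp) _ ?_
    intro i j hij
    rw [Set.mem_singleton_iff]
    intro hgg
    rcases col_cases S (cliqueD hk (⟨0, ht0⟩ : Fin (t+1)) i)
        (cliqueD hk (⟨0, ht0⟩ : Fin (t+1)) j) with hf | ⟨v, a, he, hg, hor⟩
    · rw [hgg] at hf
      rcases hu : (cliqueD hk (⟨0, ht0⟩ : Fin (t+1)) i) with u | u <;>
        rcases hw : (cliqueD hk (⟨0, ht0⟩ : Fin (t+1)) j) with w | w <;> rw [hu, hw] at hf
      · refine hA1 ⟨u, w, ?_, hf⟩
        intro huw
        exact hij ((cliqueD hk _).injective (by rw [hu, hw, huw]))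
      · exact hA2 ⟨u, w, hf⟩
      · exact hA2 ⟨w, u, hf.trans (FF_symm k t _ _)⟩
      · exact hA3 ⟨u, w, hf⟩
    · rw [hgg] at hg
      exact hB ⟨S.pi v, hg⟩

theorem mainW (S : Setup k t) (hk : 4 ≤ k) (ht : 2 ≤ t) :
    FHat k (⊤ : SimpleGraph (WW k t)) (col S) :=
  ⟨part1 S hk, part2 S hk (by omega), part3 S hk ht⟩

section Transport
variable {V W : Type*}

theorem HRC_transport (e : W ≃ V) (c : Sym2 W → ℕ) (m : ℕ) (A : Set W) (C : Set ℕ)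
    (h : HasRainbowKClique (⊤ : SimpleGraph W) c m A C) :
    HasRainbowKClique (⊤ : SimpleGraph V) (fun z => c (Sym2.map e.symm z)) m (e '' A) C := by
  obtain ⟨f, h1, h2, h3, h4⟩ := h
  refine ⟨f.trans e.toEmbedding, ?_, ?_, ?_, ?_⟩
  · intro i hi
    obtain ⟨w, hw, hew⟩ := hi
    exact h1 i (e.injective hew ▸ hw)
  · intro i j hij
    simp only [SimpleGraph.top_adj, Function.Embedding.trans_apply, Equiv.coe_toEmbedding]
    exact fun hh => (by simpa using h2 i j hij : f i ≠ f j) (e.injective hh)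
  · intro i j hij
    simpa [Sym2.map_pair_eq] using h3 i j hij
  · intro i j i' j' hij hij' hcol
    refine h4 i j i' j' hij hij' ?_
    simpa [Sym2.map_pair_eq] using hcol

theorem HRC_transport' (e : W ≃ V) (c : Sym2 W → ℕ) (m : ℕ)
    (h : HasRainbowKClique (⊤ : SimpleGraph V) (fun z => c (Sym2.map e.symm z)) m ∅ ∅) :
    HasRainbowKClique (⊤ : SimpleGraph W) c m ∅ ∅ := by
  obtain ⟨f, h1, h2, h3, h4⟩ := h
  refine ⟨f.trans e.symm.toEmbedding, by simp, ?_, by simp, ?_⟩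
  · intro i j hij
    simp only [SimpleGraph.top_adj, Function.Embedding.trans_apply, Equiv.coe_toEmbedding]
    exact fun hh => (by simpa using h2 i j hij : f i ≠ f j) (e.symm.injective hh)
  · intro i j i' j' hij hij' hcol
    refine h4 i j i' j' hij hij' ?_
    simpa [Sym2.map_pair_eq] using hcol

theorem FHat_transport (k : ℕ) (e : W ≃ V) (c : Sym2 W → ℕ)
    (h : FHat k (⊤ : SimpleGraph W) c) :
    FHat k (⊤ : SimpleGraph V) (fun z => c (Sym2.map e.symm z)) := by
  obtain ⟨h1, h2, h3⟩ := h
  refine ⟨fun hc => h1 (HRC_transport' e c (k+1) hc), ?_, ?_⟩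
  · intro v
    have := HRC_transport e c k {e.symm v} ∅ (h2 (e.symm v))
    simpa using this
  · intro col0
    have := HRC_transport e c k ∅ {col0} (h3 col0)
    simpa using this

end Transport

theorem mainFin (k t : ℕ) (hk : 4 ≤ k) (ht : 2 ≤ t) (hq1 : (t+1).choose 2 ≤ k-1)
    (hub : k-1 ≤ t*(t+1)) :
    ∃ c : Sym2 (Fin (k+t)) → ℕ, FHat k (⊤ : SimpleGraph (Fin (k+t))) c := by
  obtain ⟨S⟩ := setup_exists k t (by omega) hq1 hub
  have e : WW k t ≃ Fin (k+t) := finSumFinEquiv.trans (finCongr (by omega))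
  exact ⟨fun z => col S (Sym2.map e.symm z), FHat_transport k e (col S) (mainW S hk ht)⟩

theorem arith (k : ℕ) (hk : 4 ≤ k) :
    2 ≤ (⌈(-1 + Real.sqrt (4 * (k : ℝ) - 3)) / 2⌉).toNat ∧
    ((⌈(-1 + Real.sqrt (4 * (k : ℝ) - 3)) / 2⌉).toNat + 1).choose 2 ≤ k - 1 ∧
    k - 1 ≤ (⌈(-1 + Real.sqrt (4 * (k : ℝ) - 3)) / 2⌉).toNat *
      ((⌈(-1 + Real.sqrt (4 * (k : ℝ) - 3)) / 2⌉).toNat + 1) := by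
  set v : ℝ := (-1 + Real.sqrt (4 * (k : ℝ) - 3)) / 2 with hv
  have hknn : (0:ℝ) ≤ 4 * (k : ℝ) - 3 := by
    have : (4:ℝ) ≤ (k:ℝ) := by exact_mod_cast hk
    nlinarith
  have hsq : Real.sqrt (4 * (k : ℝ) - 3) ^ 2 = 4 * (k : ℝ) - 3 := Real.sq_sqrt hknn
  have hsnn : 0 ≤ Real.sqrt (4 * (k : ℝ) - 3) := Real.sqrt_nonneg _
  have hs3 : (3:ℝ) ≤ Real.sqrt (4 * (k : ℝ) - 3) := by
    have h4 : (4:ℝ) ≤ (k:ℝ) := by exact_mod_cast hk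
    nlinarith [hsq, hsnn, sq_nonneg (Real.sqrt (4 * (k : ℝ) - 3) - 3)]
  have hv1 : 1 ≤ v := by rw [hv]; linarith
  have hceil_pos : (1:ℤ) ≤ ⌈v⌉ := by exact_mod_cast Int.one_le_ceil_iff.mpr (by linarith)
  set T : ℕ := (⌈v⌉).toNat with hT
  have hTv : (T:ℝ) = (⌈v⌉ : ℝ) := by
    rw [hT]
    norm_cast
    omega
  have hTub : v ≤ (T:ℝ) := by rw [hTv]; exact Int.le_ceil v
  have hTlb : (T:ℝ) - 1 < v := by
    rw [hTv]
    have := Int.ceil_lt_add_one v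
    push_cast at this ⊢
    linarith
  -- k - 1 ≤ T (T+1)
  have hub : k - 1 ≤ T * (T + 1) := by
    have h1 : Real.sqrt (4 * (k : ℝ) - 3) ≤ 2 * (T:ℝ) + 1 := by
      rw [hv] at hTub; linarith
    have h2 : 4 * (k : ℝ) - 3 ≤ (2 * (T:ℝ) + 1)^2 := by
      calc 4 * (k : ℝ) - 3 = Real.sqrt (4 * (k : ℝ) - 3) ^ 2 := hsq.symm
        _ ≤ (2 * (T:ℝ) + 1)^2 := by
            apply pow_le_pow_left₀ hsnn h1
    have h3 : (k:ℝ) - 1 ≤ (T:ℝ) * ((T:ℝ) + 1) := by nlinarith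
    have h4 : ((k - 1 : ℕ) : ℝ) ≤ ((T * (T+1) : ℕ) : ℝ) := by
      push_cast
      have : ((k:ℝ) - 1) = ((k-1 : ℕ) : ℝ) := by
        have : (1:ℝ) ≤ (k:ℝ) := by exact_mod_cast (by omega : 1 ≤ k)
        push_cast [Nat.cast_sub (by omega : 1 ≤ k)]
        ring
      rw [← this]
      push_cast
      linarith
    exact_mod_cast h4
  -- T(T-1) ≤ k - 2
  have hT1 : 1 ≤ T := by
    rw [hT]; omega
  have hlow : T * (T - 1) ≤ k - 2 := by
    have h1 : 2 * (T:ℝ) - 1 ≤ Real.sqrt (4 * (k : ℝ) - 3) ∨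
        2 * (T:ℝ) - 1 < 0 := by
      rw [hv] at hTlb
      left; linarith
    have h1' : 2 * (T:ℝ) - 1 < Real.sqrt (4 * (k : ℝ) - 3) := by
      rw [hv] at hTlb; linarith
    have h2 : (2 * (T:ℝ) - 1)^2 < 4 * (k : ℝ) - 3 := by
      have hTnn : (0:ℝ) ≤ 2 * (T:ℝ) - 1 := by
        have : (1:ℝ) ≤ (T:ℝ) := by exact_mod_cast hT1
        linarith
      calc (2 * (T:ℝ) - 1)^2 < Real.sqrt (4 * (k : ℝ) - 3) ^ 2 := by
            apply sq_lt_sq' (by linarith) h1'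
        _ = 4 * (k : ℝ) - 3 := hsq
    have h3 : (T:ℝ) * ((T:ℝ) - 1) < (k:ℝ) - 1 := by nlinarith
    have h4 : (T * (T-1) : ℕ) < k - 1 := by
      have : ((T * (T-1) : ℕ) : ℝ) < ((k - 1 : ℕ) : ℝ) := by
        push_cast [Nat.cast_sub hT1, Nat.cast_sub (by omega : 1 ≤ k)]
        linarith
      exact_mod_cast this
    omega
  have hT2 : 2 ≤ T := by
    by_contra hcon
    have hT1' : T = 1 := by omega
    rw [hT1'] at hub
    omega
  refine ⟨hT2, ?_, hub⟩
  -- choose bound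
  have hch : 2 * ((T+1).choose 2) = T * (T+1) := two_mul_choose_two T
  by_cases h3 : T = 2
  · rw [h3] at hch ⊢
    have : (3:ℕ).choose 2 = 3 := by decide
    rw [this]
    omega
  · have hT3 : 3 ≤ T := by omega
    have : T + 1 ≤ 2 * (T - 1) := by omega
    have h5 : T * (T + 1) ≤ 2 * (T * (T-1)) := by
      calc T * (T+1) ≤ T * (2 * (T-1)) := Nat.mul_le_mul_left _ this
        _ = 2 * (T * (T-1)) := by ring
    omega

end FFUB

open FFUB in
/-- For `k ≥ 4` there is an edge-colored graph in `F̂_k` with exactly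
`k + ⌈(-1 + √(4k-3))/2⌉` vertices; hence `f(k) ≤ k + ⌈(-1 + √(4k-3))/2⌉`. -/
theorem fF_upper_bound (k : ℕ) (hk : 4 ≤ k) :
    (∃ (G : SimpleGraph (Fin (k + (⌈(-1 + Real.sqrt (4 * (k : ℝ) - 3)) / 2⌉).toNat)))
        (c : Sym2 (Fin (k + (⌈(-1 + Real.sqrt (4 * (k : ℝ) - 3)) / 2⌉).toNat)) → ℕ),
      FHat k G c) ∧
    fF k ≤ k + (⌈(-1 + Real.sqrt (4 * (k : ℝ) - 3)) / 2⌉).toNat := by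
  obtain ⟨hT2, hq1, hub⟩ := arith k hk
  obtain ⟨c, hc⟩ := mainFin k ((⌈(-1 + Real.sqrt (4 * (k : ℝ) - 3)) / 2⌉).toNat) hk hT2 hq1 hub
  exact ⟨⟨⊤, c, hc⟩, Nat.sInf_le ⟨⊤, c, hc⟩⟩
end
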